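/- arXiv:1707.09773 — 3 statements merged into one kernel-verified Lean document; each statement's English description precedes it below -/
import Mathlib

section
/- Let 1 ≤ p < ∞, β ∈ ℝ and u ∈ ℓ^p_β(ℤ). Then the closed linear span in ℓ^p_β(ℤ) of {S_k u : k ≥ 0} equals the closed linear span of {S_k u : k ∈ ℤ} if and only if u belongs to the closed linear span of {S_k u : k ≥ 1}. -/
open MeasureTheory Filter Set Complex

noncomputable section

/-- The weighted `ℓ^p_β` norm of a two-sided sequence:
`‖u‖_{p,β} = (∑_{n ∈ ℤ} |u n|^p (1+|n|)^{pβ})^{1/p}`. -/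
def wtNorm (p β : ℝ) (u : ℤ → ℂ) : ℝ :=
  (∑' n : ℤ, ‖u n‖ ^ p * (1 + (n.natAbs : ℝ)) ^ (p * β)) ^ (1 / p)

/-- Membership in the weighted space `ℓ^p_β(ℤ)`. -/
def MemWt (p β : ℝ) (u : ℤ → ℂ) : Prop :=
  Summable fun n : ℤ => ‖u n‖ ^ p * (1 + (n.natAbs : ℝ)) ^ (p * β)

/-- Convolution of a finitely supported sequence `a` with `u`:
`(a ∗ u) n = ∑_k a k * u (n - k)`.  This is exactly a finite linear combination
`∑_k a k • S_k u` of the shifts `S_k u = (u (· - k))` of `u`. -/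
def convFin (a : ℤ →₀ ℂ) (u : ℤ → ℂ) : ℤ → ℂ :=
  fun n => ∑ k ∈ a.support, a k * u (n - k)

/-- `v` belongs to the closed linear span, in `ℓ^p_β(ℤ)`, of the shifts
`{S_k u : k ∈ Λ}`: it can be approximated in the `ℓ^p_β` norm by finite linear
combinations of shifts `S_k u` with `k ∈ Λ`. -/
def InClosedSpanShifts (p β : ℝ) (Λ : Set ℤ) (u v : ℤ → ℂ) : Prop :=
  ∀ ε : ℝ, 0 < ε → ∃ a : ℤ →₀ ℂ, (∀ k, a k ≠ 0 → k ∈ Λ) ∧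
    wtNorm p β (fun n => v n - convFin a u n) < ε

/-- `u` is cyclic in `ℓ^p_β(ℤ)`: `u ∈ ℓ^p_β(ℤ)` and the closed linear span of
`{S_k u : k ≥ 0}` is all of `ℓ^p_β(ℤ)`. -/
def IsCyclicIn (p β : ℝ) (u : ℤ → ℂ) : Prop :=
  MemWt p β u ∧ ∀ v : ℤ → ℂ, MemWt p β v → InClosedSpanShifts p β {k : ℤ | 0 ≤ k} u v

/-- `u` is bicyclic in `ℓ^p_β(ℤ)`: `u ∈ ℓ^p_β(ℤ)` and the closed linear span of
`{S_k u : k ∈ ℤ}` is all of `ℓ^p_β(ℤ)`. -/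
def IsBicyclicIn (p β : ℝ) (u : ℤ → ℂ) : Prop :=
  MemWt p β u ∧ ∀ v : ℤ → ℂ, MemWt p β v → InClosedSpanShifts p β Set.univ u v

/-- The Fourier transform `û(z) = ∑_{n ∈ ℤ} u n zⁿ` of `u ∈ ℓ¹(ℤ)`, as a function on `ℂ`
(only its values on the unit circle are relevant). -/
def hatFn (u : ℤ → ℂ) (z : ℂ) : ℂ := ∑' n : ℤ, u n * z ^ n

/-- The zero set `Z(û) = {ζ ∈ 𝕋 : û(ζ) = 0}` of the Fourier transform of `u`. -/
def zeroSetHat (u : ℤ → ℂ) : Set ℂ := {z : ℂ | ‖z‖ = 1 ∧ hatFn u z = 0}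

/-- The `n`-th Fourier coefficient of a function `f` on the unit circle 𝕋:
`f̂(n) = (1/2π) ∫₀^{2π} f(e^{iθ}) e^{-inθ} dθ`. -/
def circleCoeff (f : ℂ → ℂ) (n : ℤ) : ℂ :=
  (1 / (2 * (Real.pi : ℂ))) *
    ∫ θ in (0:ℝ)..(2 * Real.pi),
      f (Complex.exp (θ * Complex.I)) * Complex.exp (-(n : ℂ) * θ * Complex.I)

/-- The zero set of a function `f` on the unit circle 𝕋. -/
def zeroSetFn (f : ℂ → ℂ) : Set ℂ := {z : ℂ | ‖z‖ = 1 ∧ f z = 0}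

/-- The `m`-th Fourier coefficient of a test function on 𝕋 given through the
`2π`-periodic parametrization `ψ : ℝ → ℂ`, i.e. `φ(e^{iθ}) = ψ θ`. -/
def circleCoeffR (ψ : ℝ → ℂ) (m : ℤ) : ℂ :=
  (1 / (2 * (Real.pi : ℂ))) *
    ∫ θ in (0:ℝ)..(2 * Real.pi), ψ θ * Complex.exp (-(m : ℂ) * θ * Complex.I)

/-- The distribution `S = ∑_n c n ζⁿ` on 𝕋 is supported in the closed set `E ⊆ 𝕋`:
`⟨S, φ⟩ = ∑_n c n φ̂(-n) = 0` for every `C^∞` test function `φ` on 𝕋 (given through its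
`2π`-periodic parametrization `ψ`) whose support is disjoint from `E`. -/
def DistSupportedIn (c : ℤ → ℂ) (E : Set ℂ) : Prop :=
  ∀ ψ : ℝ → ℂ, ContDiff ℝ (⊤ : ℕ∞) ψ → (∀ θ : ℝ, ψ (θ + 2 * Real.pi) = ψ θ) →
    (∀ θ ∈ tsupport ψ, Complex.exp (θ * Complex.I) ∉ E) →
    ∑' n : ℤ, c n * circleCoeffR ψ (-n) = 0

/-- `K` is a Helson subset of the unit circle 𝕋: `K` is compact, `K ⊆ 𝕋`, and there is
`δ > 0` such that every complex Borel measure `μ` supported in `K` satisfies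
`limsup_{|n| → ∞} |μ̂(n)| ≥ δ ‖μ‖`.  A complex measure `μ` is encoded through its polar
decomposition `dμ = h d ν`, where `ν = |μ|` is a finite positive measure and `|h| = 1`
`ν`-a.e.; then `‖μ‖ = ν(𝕋)` and `μ̂(n) = ∫ ζ^{-n} h(ζ) dν(ζ)`. -/
def IsHelsonSet (K : Set ℂ) : Prop :=
  IsCompact K ∧ K ⊆ {z : ℂ | ‖z‖ = 1} ∧
    ∃ δ : ℝ, 0 < δ ∧
      ∀ ν : Measure ℂ, IsFiniteMeasure ν → ν Kᶜ = 0 →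
        ∀ h : ℂ → ℂ, Measurable h → (∀ᵐ z ∂ν, ‖h z‖ = 1) →
          δ * (ν Set.univ).toReal ≤
            Filter.limsup (fun n : ℤ => ‖∫ z, z ^ (-n) * h z ∂ν‖) Filter.cofinite

/-- The sequence `e₀ = (…,0,0,1,0,0,…)`, equal to `1` at index `0` and `0` elsewhere
(its Fourier transform is the constant function `1`). -/
def e0 : ℤ → ℂ := fun n => if n = 0 then 1 else 0

namespace Stmt1Aux

variable {p β : ℝ}

/-- weight at norm level -/
def wt (β : ℝ) (n : ℤ) : ℝ := (1 + (n.natAbs : ℝ)) ^ β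

lemma one_le_base (n : ℤ) : (1:ℝ) ≤ 1 + (n.natAbs : ℝ) := by simp [Nat.cast_nonneg]

lemma wt_pos (β : ℝ) (n : ℤ) : 0 < wt β n :=
  Real.rpow_pos_of_pos (by positivity) _

def Fmap (β : ℝ) (v : ℤ → ℂ) : ℤ → ℂ := fun n => v n * (wt β n : ℝ)

lemma normF_rpow (hp : 1 ≤ p) (v : ℤ → ℂ) (n : ℤ) :
    ‖Fmap β v n‖ ^ p = ‖v n‖ ^ p * (1 + (n.natAbs : ℝ)) ^ (p * β) := by
  have h0 : (0:ℝ) ≤ 1 + (n.natAbs : ℝ) := by positivity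
  have : ‖Fmap β v n‖ = ‖v n‖ * wt β n := by
    simp [Fmap, abs_of_pos (wt_pos β n), Complex.norm_real,
      Real.norm_eq_abs]
  rw [this, Real.mul_rpow (norm_nonneg _) (wt_pos β n).le, wt,
    ← Real.rpow_mul h0, mul_comm β p]

lemma memWt_iff_memℓp (hp : 1 ≤ p) (v : ℤ → ℂ) :
    MemWt p β v ↔ Memℓp (Fmap β v) (ENNReal.ofReal p) := by
  have hq : (ENNReal.ofReal p).toReal = p := ENNReal.toReal_ofReal (by linarith)
  rw [memℓp_gen_iff (by rw [hq]; linarith), hq]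
  unfold MemWt
  constructor <;> intro h <;> [skip; skip] <;>
    · refine h.congr fun n => ?_
      rw [normF_rpow hp]

lemma wtNorm_eq_lp_norm (hp : 1 ≤ p) (v : ℤ → ℂ) (hv : Memℓp (Fmap β v) (ENNReal.ofReal p)) :
    wtNorm p β v = ‖(⟨Fmap β v, hv⟩ : lp (fun _ : ℤ => ℂ) (ENNReal.ofReal p))‖ := by
  have hq : (ENNReal.ofReal p).toReal = p := ENNReal.toReal_ofReal (by linarith)
  rw [lp.norm_eq_tsum_rpow (by rw [hq]; linarith), hq]
  unfold wtNorm
  congr 1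
  exact tsum_congr fun n => (normF_rpow hp v n).symm

lemma wtNorm_nonneg (v : ℤ → ℂ) : 0 ≤ wtNorm p β v := by
  unfold wtNorm
  apply Real.rpow_nonneg
  apply tsum_nonneg
  intro n
  positivity

lemma MemWt.add (hp : 1 ≤ p) {v w : ℤ → ℂ} (hv : MemWt p β v) (hw : MemWt p β w) :
    MemWt p β (fun n => v n + w n) := by
  rw [memWt_iff_memℓp hp] at *
  have : Fmap β (fun n => v n + w n) = fun n => Fmap β v n + Fmap β w n := by
    funext n; simp [Fmap]; ring
  rw [this]
  exact hv.add hw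

lemma MemWt.smul (hp : 1 ≤ p) {v : ℤ → ℂ} (c : ℂ) (hv : MemWt p β v) :
    MemWt p β (fun n => c * v n) := by
  rw [memWt_iff_memℓp hp] at *
  have : Fmap β (fun n => c * v n) = fun n => c • Fmap β v n := by
    funext n; simp [Fmap]; ring
  rw [this]
  exact hv.const_smul c

lemma MemWt.sub (hp : 1 ≤ p) {v w : ℤ → ℂ} (hv : MemWt p β v) (hw : MemWt p β w) :
    MemWt p β (fun n => v n - w n) := by
  have := MemWt.add hp hv (MemWt.smul hp (-1) hw)
  refine this.congr fun n => ?_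
  ring_nf

lemma wtNorm_add_le (hp : 1 ≤ p) {v w : ℤ → ℂ} (hv : MemWt p β v) (hw : MemWt p β w) :
    wtNorm p β (fun n => v n + w n) ≤ wtNorm p β v + wtNorm p β w := by
  haveI : Fact (1 ≤ ENNReal.ofReal p) := ⟨ENNReal.one_le_ofReal.2 (by linarith)⟩
  rw [memWt_iff_memℓp hp] at hv hw
  have hvw : Memℓp (Fmap β (fun n => v n + w n)) (ENNReal.ofReal p) := by
    have : Fmap β (fun n => v n + w n) = fun n => Fmap β v n + Fmap β w n := by
      funext n; simp [Fmap]; ring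
    rw [this]; exact hv.add hw
  rw [wtNorm_eq_lp_norm hp _ hv, wtNorm_eq_lp_norm hp _ hw, wtNorm_eq_lp_norm hp _ hvw]
  have : (⟨Fmap β (fun n => v n + w n), hvw⟩ : lp (fun _ : ℤ => ℂ) (ENNReal.ofReal p)) =
      ⟨Fmap β v, hv⟩ + ⟨Fmap β w, hw⟩ := by
    ext n; simp [Fmap]; show _ = Fmap β v n + Fmap β w n; simp only [Fmap]; ring
  rw [this]
  exact norm_add_le _ _

lemma weight_key {γ : ℝ} {A B J : ℝ} (hA : 1 ≤ A) (hB : 1 ≤ B) (hJ : 1 ≤ J)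
    (h1 : A ≤ B * J) (h2 : B ≤ A * J) : A ^ γ ≤ J ^ |γ| * B ^ γ := by
  rcases le_or_gt 0 γ with hγ | hγ
  · rw [_root_.abs_of_nonneg hγ]
    calc A ^ γ ≤ (B * J) ^ γ := Real.rpow_le_rpow (by linarith) h1 hγ
      _ = J ^ γ * B ^ γ := by
          rw [Real.mul_rpow (by linarith) (by linarith)]; ring
  · rw [_root_.abs_of_neg hγ]
    have hBJ : B / J ≤ A := by
      rw [div_le_iff₀ (by linarith)]; exact h2
    have hBJ0 : (0:ℝ) < B / J := by positivity
    calc A ^ γ ≤ (B / J) ^ γ := Real.rpow_le_rpow_of_nonpos hBJ0 hBJ hγ.le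
      _ = J ^ (-γ) * B ^ γ := by
          rw [Real.div_rpow (by linarith) (by linarith), Real.rpow_neg (by linarith)]
          field_simp

/-- `(1+|n|)^γ ≤ (1+|j|)^{|γ|} (1+|n-j|)^γ` -/
lemma weight_shift (γ : ℝ) (n j : ℤ) :
    (1 + (n.natAbs : ℝ)) ^ γ ≤
      (1 + (j.natAbs : ℝ)) ^ |γ| * (1 + ((n - j).natAbs : ℝ)) ^ γ := by
  apply weight_key (le_add_of_nonneg_right (Nat.cast_nonneg _)) (le_add_of_nonneg_right (Nat.cast_nonneg _)) (le_add_of_nonneg_right (Nat.cast_nonneg _))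
  · have h : (n.natAbs : ℝ) ≤ (n - j).natAbs + j.natAbs := by
      have := Int.natAbs_add_le (n - j) j
      simp at this
      exact_mod_cast (by exact_mod_cast this : ((n.natAbs : ℝ)) ≤ ((n-j).natAbs + j.natAbs : ℕ))
    nlinarith [Nat.cast_nonneg (α := ℝ) (n - j).natAbs, Nat.cast_nonneg (α := ℝ) j.natAbs]
  · have h : ((n - j).natAbs : ℝ) ≤ n.natAbs + j.natAbs := by
      have := Int.natAbs_sub_le n j
      exact_mod_cast this
    nlinarith [Nat.cast_nonneg (α := ℝ) n.natAbs, Nat.cast_nonneg (α := ℝ) j.natAbs]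


lemma memWt_shift (hp : 1 ≤ p) {v : ℤ → ℂ} (hv : MemWt p β v) (j : ℤ) :
    MemWt p β (fun n => v (n - j)) := by
  set C : ℝ := (1 + (j.natAbs : ℝ)) ^ |p * β| with hC
  have hg : Summable (fun n : ℤ => ‖v (n - j)‖ ^ p * (1 + ((n - j).natAbs : ℝ)) ^ (p * β)) := by
    have h := ((Equiv.subRight j).summable_iff
      (f := fun m : ℤ => ‖v m‖ ^ p * (1 + (m.natAbs : ℝ)) ^ (p * β))).2 hv
    simpa [Function.comp_def, Equiv.subRight] using h
  refine Summable.of_nonneg_of_le (fun n => by positivity) (fun n => ?_) (hg.mul_left C)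
  ·
    have := weight_shift (p * β) n j
    have h0 : (0:ℝ) ≤ ‖v (n - j)‖ ^ p := by positivity
    calc ‖v (n - j)‖ ^ p * (1 + (n.natAbs : ℝ)) ^ (p * β)
        ≤ ‖v (n - j)‖ ^ p * (C * (1 + ((n - j).natAbs : ℝ)) ^ (p * β)) :=
          mul_le_mul_of_nonneg_left this h0
      _ = C * (‖v (n - j)‖ ^ p * (1 + ((n - j).natAbs : ℝ)) ^ (p * β)) := by ring

lemma wtNorm_shift_le (hp : 1 ≤ p) {v : ℤ → ℂ} (hv : MemWt p β v) (j : ℤ) :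
    wtNorm p β (fun n => v (n - j)) ≤ (1 + (j.natAbs : ℝ)) ^ |β| * wtNorm p β v := by
  have hp0 : (0:ℝ) < p := by linarith
  set C : ℝ := (1 + (j.natAbs : ℝ)) ^ |p * β| with hC
  have hCpos : (0:ℝ) < C := Real.rpow_pos_of_pos (by positivity) _
  have hg : Summable (fun n : ℤ => ‖v (n - j)‖ ^ p * (1 + ((n - j).natAbs : ℝ)) ^ (p * β)) := by
    have h := ((Equiv.subRight j).summable_iff
      (f := fun m : ℤ => ‖v m‖ ^ p * (1 + (m.natAbs : ℝ)) ^ (p * β))).2 hv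
    simpa [Function.comp_def, Equiv.subRight] using h
  have hsum_le : (∑' n : ℤ, ‖v (n - j)‖ ^ p * (1 + (n.natAbs : ℝ)) ^ (p * β)) ≤
      C * ∑' n : ℤ, ‖v n‖ ^ p * (1 + (n.natAbs : ℝ)) ^ (p * β) := by
    have h1 : (∑' n : ℤ, ‖v (n - j)‖ ^ p * (1 + (n.natAbs : ℝ)) ^ (p * β)) ≤
        ∑' n : ℤ, C * (‖v (n - j)‖ ^ p * (1 + ((n - j).natAbs : ℝ)) ^ (p * β)) := by
      apply Summable.tsum_le_tsum _ (memWt_shift hp hv j) (hg.mul_left C)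
      intro n
      have := weight_shift (p * β) n j
      have h0 : (0:ℝ) ≤ ‖v (n - j)‖ ^ p := by positivity
      calc ‖v (n - j)‖ ^ p * (1 + (n.natAbs : ℝ)) ^ (p * β)
          ≤ ‖v (n - j)‖ ^ p * (C * (1 + ((n - j).natAbs : ℝ)) ^ (p * β)) :=
            mul_le_mul_of_nonneg_left this h0
        _ = C * (‖v (n - j)‖ ^ p * (1 + ((n - j).natAbs : ℝ)) ^ (p * β)) := by ring
    rw [tsum_mul_left] at h1
    have heq : (∑' n : ℤ, ‖v (n - j)‖ ^ p * (1 + ((n - j).natAbs : ℝ)) ^ (p * β)) =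
        ∑' n : ℤ, ‖v n‖ ^ p * (1 + (n.natAbs : ℝ)) ^ (p * β) := by
      have h := (Equiv.subRight j).tsum_eq
        (f := fun n : ℤ => ‖v n‖ ^ p * (1 + (n.natAbs : ℝ)) ^ (p * β))
      simpa [Equiv.subRight] using h
    rwa [heq] at h1
  unfold wtNorm
  have hnn : (0:ℝ) ≤ ∑' n : ℤ, ‖v (n - j)‖ ^ p * (1 + (n.natAbs : ℝ)) ^ (p * β) :=
    tsum_nonneg fun n => by positivity
  calc (∑' n : ℤ, ‖v (n - j)‖ ^ p * (1 + (n.natAbs : ℝ)) ^ (p * β)) ^ (1 / p)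
      ≤ (C * ∑' n : ℤ, ‖v n‖ ^ p * (1 + (n.natAbs : ℝ)) ^ (p * β)) ^ (1 / p) :=
        Real.rpow_le_rpow hnn hsum_le (by positivity)
    _ = C ^ (1 / p) * (∑' n : ℤ, ‖v n‖ ^ p * (1 + (n.natAbs : ℝ)) ^ (p * β)) ^ (1 / p) :=
        Real.mul_rpow hCpos.le (tsum_nonneg fun n => by positivity)
    _ = (1 + (j.natAbs : ℝ)) ^ |β| * _ := by
        congr 1
        rw [hC, ← Real.rpow_mul (by positivity), abs_mul, _root_.abs_of_pos hp0]
        congr 1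
        field_simp

lemma wtNorm_zero (hp : 1 ≤ p) : wtNorm p β (fun _ => 0) = 0 := by
  unfold wtNorm
  have hp0 : p ≠ 0 := by linarith
  simp [Real.zero_rpow hp0, one_div, Real.zero_rpow (inv_ne_zero hp0)]

lemma wtNorm_smul (hp : 1 ≤ p) (c : ℂ) (v : ℤ → ℂ) :
    wtNorm p β (fun n => c * v n) = ‖c‖ * wtNorm p β v := by
  have hp0 : (0:ℝ) < p := by linarith
  unfold wtNorm
  have : ∀ n : ℤ, ‖c * v n‖ ^ p * (1 + (n.natAbs : ℝ)) ^ (p * β) =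
      ‖c‖ ^ p * (‖v n‖ ^ p * (1 + (n.natAbs : ℝ)) ^ (p * β)) := by
    intro n
    rw [norm_mul, Real.mul_rpow (norm_nonneg _) (norm_nonneg _)]
    ring
  rw [tsum_congr this, tsum_mul_left,
    Real.mul_rpow (by positivity) (tsum_nonneg fun n => by positivity),
    ← Real.rpow_mul (norm_nonneg _), mul_one_div_cancel hp0.ne', Real.rpow_one]

lemma wtNorm_congr {f g : ℤ → ℂ} (h : ∀ n, f n = g n) : wtNorm p β f = wtNorm p β g := by
  unfold wtNorm; congr 1; exact tsum_congr fun n => by rw [h n]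

lemma MemWt.congr {f g : ℤ → ℂ} (hf : MemWt p β f) (h : ∀ n, f n = g n) : MemWt p β g :=
  Summable.congr hf fun n => by rw [h n]

lemma memWt_zero (hp : 1 ≤ p) : MemWt p β (fun _ => 0) := by
  apply summable_zero.congr
  intro n
  rw [norm_zero, Real.zero_rpow (by linarith), zero_mul]

lemma convFin_apply (a : ℤ →₀ ℂ) (u : ℤ → ℂ) (n : ℤ) :
    convFin a u n = a.sum fun k c => c * u (n - k) := rfl

lemma convFin_single (k : ℤ) (c : ℂ) (u : ℤ → ℂ) (n : ℤ) :
    convFin (Finsupp.single k c) u n = c * u (n - k) := by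
  rw [convFin_apply, Finsupp.sum_single_index (by simp)]

lemma convFin_add (a b : ℤ →₀ ℂ) (u : ℤ → ℂ) (n : ℤ) :
    convFin (a + b) u n = convFin a u n + convFin b u n := by
  simp only [convFin_apply]
  exact Finsupp.sum_add_index (by simp) (by intros; ring)

lemma convFin_smul (c : ℂ) (a : ℤ →₀ ℂ) (u : ℤ → ℂ) (n : ℤ) :
    convFin (c • a) u n = c * convFin a u n := by
  simp only [convFin_apply]
  rw [Finsupp.sum_smul_index (by simp), Finsupp.mul_sum]
  exact Finsupp.sum_congr fun k _ => by ring

lemma convFin_finsetSum {ι : Type*} (s : Finset ι) (g : ι → ℤ →₀ ℂ) (u : ℤ → ℂ) (n : ℤ) :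
    convFin (∑ i ∈ s, g i) u n = ∑ i ∈ s, convFin (g i) u n := by
  classical
  induction s using Finset.induction with
  | empty => simp [convFin_apply]
  | insert _ _ hx ih =>
      rw [Finset.sum_insert hx, convFin_add, ih, Finset.sum_insert hx]

lemma convFin_mapDomain (j : ℤ) (a : ℤ →₀ ℂ) (u : ℤ → ℂ) (n : ℤ) :
    convFin (Finsupp.mapDomain (· + j) a) u n = convFin a u (n - j) := by
  simp only [convFin_apply]
  rw [Finsupp.sum_mapDomain_index (by simp) (by intros; ring)]
  exact Finsupp.sum_congr fun k _ => by rw [sub_sub, add_comm j k]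

lemma memWt_finsetSum (hp : 1 ≤ p) {ι : Type*} (s : Finset ι) (g : ι → ℤ → ℂ)
    (hg : ∀ i ∈ s, MemWt p β (g i)) :
    MemWt p β (fun n => ∑ i ∈ s, g i n) := by
  classical
  induction s using Finset.induction with
  | empty => simpa using memWt_zero hp
  | insert i s' hx ih =>
      have h1 : MemWt p β (fun n => g i n + ∑ i' ∈ s', g i' n) :=
        MemWt.add hp (hg i (Finset.mem_insert_self i s'))
          (ih fun i' hi' => hg i' (Finset.mem_insert_of_mem hi'))
      exact h1.congr fun n => by simp only [Finset.sum_insert hx]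

lemma memWt_convFin (hp : 1 ≤ p) {u : ℤ → ℂ} (hu : MemWt p β u) (a : ℤ →₀ ℂ) :
    MemWt p β (convFin a u) := by
  have h := memWt_finsetSum hp a.support (fun k => fun n => a k * u (n - k))
    (fun k _ => MemWt.smul hp (a k) (memWt_shift hp hu k))
  exact h.congr fun n => rfl

lemma wtNorm_finsetSum_le (hp : 1 ≤ p) {ι : Type*} (s : Finset ι) (g : ι → ℤ → ℂ)
    (hg : ∀ i ∈ s, MemWt p β (g i)) :
    wtNorm p β (fun n => ∑ i ∈ s, g i n) ≤ ∑ i ∈ s, wtNorm p β (g i) := by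
  classical
  induction s using Finset.induction with
  | empty =>
      simp only [Finset.sum_empty]
      exact le_of_eq (wtNorm_zero hp)
  | insert i s' hx ih =>
      have hgi := hg i (Finset.mem_insert_self i s')
      have hgs : ∀ i' ∈ s', MemWt p β (g i') := fun i' hi' => hg i' (Finset.mem_insert_of_mem hi')
      calc wtNorm p β (fun n => ∑ i' ∈ insert i s', g i' n)
          = wtNorm p β (fun n => g i n + ∑ i' ∈ s', g i' n) :=
            wtNorm_congr fun n => by rw [Finset.sum_insert hx]
        _ ≤ wtNorm p β (g i) + wtNorm p β (fun n => ∑ i' ∈ s', g i' n) :=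
            wtNorm_add_le hp hgi (memWt_finsetSum hp s' g hgs)
        _ ≤ wtNorm p β (g i) + ∑ i' ∈ s', wtNorm p β (g i') := by
            exact add_le_add (le_refl _) (ih hgs)
        _ = ∑ i' ∈ insert i s', wtNorm p β (g i') := by rw [Finset.sum_insert hx]

lemma icss_mono {Λ Λ' : Set ℤ} {u v : ℤ → ℂ} (h : Λ ⊆ Λ')
    (hv : InClosedSpanShifts p β Λ u v) : InClosedSpanShifts p β Λ' u v := by
  intro ε hε
  obtain ⟨a, ha, hn⟩ := hv ε hε
  exact ⟨a, fun k hk => h (ha k hk), hn⟩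

lemma icss_congr {Λ : Set ℤ} {u v w : ℤ → ℂ} (h : ∀ n, v n = w n)
    (hv : InClosedSpanShifts p β Λ u v) : InClosedSpanShifts p β Λ u w := by
  intro ε hε
  obtain ⟨a, ha, hn⟩ := hv ε hε
  refine ⟨a, ha, ?_⟩
  calc wtNorm p β (fun n => w n - convFin a u n)
      = wtNorm p β (fun n => v n - convFin a u n) := wtNorm_congr fun n => by rw [h n]
    _ < ε := hn

lemma icss_single (hp : 1 ≤ p) {Λ : Set ℤ} {u : ℤ → ℂ} {j : ℤ} (hj : j ∈ Λ) :
    InClosedSpanShifts p β Λ u (fun n => u (n - j)) := by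
  intro ε hε
  refine ⟨Finsupp.single j 1, ?_, ?_⟩
  · intro k hk
    have : k = j := by
      by_contra hne
      rw [Finsupp.single_apply, if_neg (fun h => hne h.symm)] at hk
      exact hk rfl
    rwa [this]
  · have : (fun n => u (n - j) - convFin (Finsupp.single j 1) u n) = fun _ => 0 := by
      funext n
      rw [convFin_single, one_mul, sub_self]
    rw [this, wtNorm_zero hp]
    exact hε

lemma icss_shift (hp : 1 ≤ p) {Λ : Set ℤ} {u v : ℤ → ℂ} (hu : MemWt p β u)
    (hv : MemWt p β v) (h : InClosedSpanShifts p β Λ u v) (j : ℤ) :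
    InClosedSpanShifts p β {k : ℤ | ∃ m ∈ Λ, k = m + j} u (fun n => v (n - j)) := by
  intro ε hε
  set C : ℝ := (1 + (j.natAbs : ℝ)) ^ |β| with hCdef
  have hC : (0:ℝ) < C := Real.rpow_pos_of_pos (by positivity) _
  obtain ⟨a, ha, hn⟩ := h (ε / C) (by positivity)
  refine ⟨Finsupp.mapDomain (· + j) a, ?_, ?_⟩
  · intro k hk
    have hk' : k ∈ (Finsupp.mapDomain (· + j) a).support := Finsupp.mem_support_iff.2 hk
    have := Finsupp.mapDomain_support hk'
    obtain ⟨m, hm, rfl⟩ := Finset.mem_image.1 this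
    exact ⟨m, ha m (Finsupp.mem_support_iff.1 hm), rfl⟩
  · have heq : (fun n => v (n - j) - convFin (Finsupp.mapDomain (· + j) a) u n) =
        fun n => (fun m => v m - convFin a u m) (n - j) := by
      funext n
      rw [convFin_mapDomain]
    rw [heq]
    have hmem : MemWt p β (fun m => v m - convFin a u m) :=
      MemWt.sub hp hv (memWt_convFin hp hu a)
    calc wtNorm p β (fun n => (fun m => v m - convFin a u m) (n - j))
        ≤ C * wtNorm p β (fun m => v m - convFin a u m) := wtNorm_shift_le hp hmem j
      _ < C * (ε / C) := by
          apply mul_lt_mul_of_pos_left hn hC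
      _ = ε := by field_simp

lemma icss_trans (hp : 1 ≤ p) {Λ Λ' : Set ℤ} {u v : ℤ → ℂ} (hu : MemWt p β u)
    (hv : MemWt p β v) (h : InClosedSpanShifts p β Λ u v)
    (hshift : ∀ k ∈ Λ, InClosedSpanShifts p β Λ' u (fun n => u (n - k))) :
    InClosedSpanShifts p β Λ' u v := by
  classical
  intro ε hε
  obtain ⟨a, ha, hn⟩ := h (ε / 2) (by positivity)
  set s := a.support with hs
  set m : ℝ := (s.card : ℝ) with hm
  have hm0 : (0:ℝ) ≤ m := Nat.cast_nonneg _
  -- for each k in s, approximate the shift S_k u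
  have hchoice : ∀ k ∈ s, ∃ b : ℤ →₀ ℂ, (∀ k', b k' ≠ 0 → k' ∈ Λ') ∧
      wtNorm p β (fun n => u (n - k) - convFin b u n) < ε / (2 * (m + 1) * (‖a k‖ + 1)) := by
    intro k hk
    have hkΛ : k ∈ Λ := ha k (Finsupp.mem_support_iff.1 hk)
    exact hshift k hkΛ (ε / (2 * (m + 1) * (‖a k‖ + 1))) (by positivity)
  choose b hb hbn using hchoice
  set B : ℤ →₀ ℂ := ∑ k ∈ s.attach, a k • b k k.2 with hB
  refine ⟨B, ?_, ?_⟩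
  · intro k' hk'
    rw [hB] at hk'
    rw [Finsupp.finset_sum_apply] at hk'
    obtain ⟨k, -, hkne⟩ := Finset.exists_ne_zero_of_sum_ne_zero hk'
    rw [Finsupp.smul_apply] at hkne
    have : b k k.2 k' ≠ 0 := fun h0 => hkne (by rw [h0, smul_zero])
    exact hb k k.2 k' this
  · have hconvB : ∀ n, convFin B u n = ∑ k ∈ s.attach, a k * convFin (b k k.2) u n := by
      intro n
      rw [hB, convFin_finsetSum]
      exact Finset.sum_congr rfl fun k _ => convFin_smul _ _ _ _
    -- decompose
    have hdecomp : ∀ n, v n - convFin B u n =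
        (v n - convFin a u n) +
          ∑ k ∈ s.attach, a (k : ℤ) * ((fun n' => u (n' - k) - convFin (b k k.2) u n') n) := by
      intro n
      rw [hconvB]
      have h1 : convFin a u n = ∑ k ∈ s.attach, a (k:ℤ) * u (n - (k:ℤ)) := by
        rw [convFin_apply, Finsupp.sum]
        exact (Finset.sum_attach s (fun k => a k * u (n - k))).symm
      rw [h1]
      have h2 : ∑ k ∈ s.attach, a (k:ℤ) * ((fun n' => u (n' - (k:ℤ)) - convFin (b k k.2) u n') n)
          = ∑ k ∈ s.attach, (a (k:ℤ) * u (n - (k:ℤ)) - a (k:ℤ) * convFin (b k k.2) u n) :=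
        Finset.sum_congr rfl fun k _ => by ring
      rw [h2, Finset.sum_sub_distrib]
      ring
    -- memberships
    have hmem1 : MemWt p β (fun n => v n - convFin a u n) :=
      MemWt.sub hp hv (memWt_convFin hp hu a)
    have hmemk : ∀ k : {x // x ∈ s}, MemWt p β
        (fun n => a (k : ℤ) * ((fun n' => u (n' - k) - convFin (b k k.2) u n') n)) := by
      intro k
      exact MemWt.smul hp _ (MemWt.sub hp (memWt_shift hp hu _) (memWt_convFin hp hu _))
    -- the norm bound
    calc wtNorm p β (fun n => v n - convFin B u n)
        = wtNorm p β (fun n => (v n - convFin a u n) +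
            ∑ k ∈ s.attach, a (k : ℤ) * ((fun n' => u (n' - k) - convFin (b k k.2) u n') n)) :=
          wtNorm_congr fun n => hdecomp n
      _ ≤ wtNorm p β (fun n => v n - convFin a u n) +
            wtNorm p β (fun n => ∑ k ∈ s.attach,
              a (k : ℤ) * ((fun n' => u (n' - k) - convFin (b k k.2) u n') n)) :=
          wtNorm_add_le hp hmem1 (memWt_finsetSum hp _ _ fun k _ => hmemk k)
      _ ≤ wtNorm p β (fun n => v n - convFin a u n) +
            ∑ k ∈ s.attach, wtNorm p β (fun n =>
              a (k : ℤ) * ((fun n' => u (n' - k) - convFin (b k k.2) u n') n)) := by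
          exact add_le_add (le_refl _) (wtNorm_finsetSum_le hp _ _ fun k _ => hmemk k)
      _ ≤ wtNorm p β (fun n => v n - convFin a u n) +
            ∑ _k ∈ s.attach, ε / (2 * (m + 1)) := by
          apply add_le_add (le_refl _)
          apply Finset.sum_le_sum
          intro k _
          rw [wtNorm_smul hp]
          have h1 : wtNorm p β (fun n' => u (n' - k) - convFin (b k k.2) u n') ≤
              ε / (2 * (m + 1) * (‖a (k:ℤ)‖ + 1)) := (hbn k k.2).le
          calc ‖a (k:ℤ)‖ * wtNorm p β (fun n' => u (n' - k) - convFin (b k k.2) u n')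
              ≤ ‖a (k:ℤ)‖ * (ε / (2 * (m + 1) * (‖a (k:ℤ)‖ + 1))) :=
                mul_le_mul_of_nonneg_left h1 (norm_nonneg _)
            _ ≤ ε / (2 * (m + 1)) := by
                rw [div_mul_eq_div_div]
                have hX : (0:ℝ) ≤ ε / (2 * (m + 1)) := by positivity
                calc ‖a (k:ℤ)‖ * (ε / (2 * (m + 1)) / (‖a (k:ℤ)‖ + 1))
                    = ε / (2 * (m + 1)) * (‖a (k:ℤ)‖ / (‖a (k:ℤ)‖ + 1)) := by ring
                  _ ≤ ε / (2 * (m + 1)) * 1 := by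
                      apply mul_le_mul_of_nonneg_left _ hX
                      rw [div_le_one (by positivity)]
                      linarith [norm_nonneg (a (k:ℤ))]
                  _ = ε / (2 * (m + 1)) := mul_one _
      _ < ε := by
          rw [Finset.sum_const, Finset.card_attach, nsmul_eq_mul]
          have hc : (0:ℝ) ≤ (s.card : ℝ) := Nat.cast_nonneg _
          have : (s.card : ℝ) * (ε / (2 * (m + 1))) ≤ ε / 2 := by
            rw [hm, mul_div_assoc']
            rw [div_le_div_iff₀ (by positivity) (by norm_num)]
            nlinarith [hε.le]
          linarith

theorem stmt1' (p β : ℝ) (hp : 1 ≤ p) (u : ℤ → ℂ) (hu : MemWt p β u) :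
    (∀ v : ℤ → ℂ, MemWt p β v →
        (InClosedSpanShifts p β {k : ℤ | 0 ≤ k} u v ↔
          InClosedSpanShifts p β Set.univ u v)) ↔
      InClosedSpanShifts p β {k : ℤ | 1 ≤ k} u u := by
  constructor
  · intro h
    have hv : MemWt p β (fun n => u (n - (-1))) := memWt_shift hp hu (-1)
    have hvuniv : InClosedSpanShifts p β Set.univ u (fun n => u (n - (-1))) :=
      icss_single hp (Set.mem_univ _)
    have hv0 : InClosedSpanShifts p β {k : ℤ | 0 ≤ k} u (fun n => u (n - (-1))) :=
      (h _ hv).2 hvuniv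
    have hsh := icss_shift hp hu hv hv0 1
    have hmono : {k : ℤ | ∃ m ∈ {k : ℤ | 0 ≤ k}, k = m + 1} ⊆ {k : ℤ | 1 ≤ k} := by
      rintro k ⟨m, hm, rfl⟩
      simp only [Set.mem_setOf_eq] at hm ⊢
      omega
    have hfin := icss_mono hmono hsh
    apply icss_congr (v := fun n => (fun n' => u (n' - (-1))) (n - 1)) ?_ hfin
    intro n
    show u (n - 1 - (-1)) = u n
    norm_num
  · intro h1 v hv
    constructor
    · exact icss_mono (Set.subset_univ _)
    · intro hvuniv
      have key : ∀ k : ℤ, InClosedSpanShifts p β {k' : ℤ | 0 ≤ k'} u (fun n => u (n - k)) := by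
        have main : ∀ m : ℕ, ∀ k : ℤ, -(m:ℤ) ≤ k →
            InClosedSpanShifts p β {k' : ℤ | 0 ≤ k'} u (fun n => u (n - k)) := by
          intro m
          induction m with
          | zero => intro k hk; exact icss_single hp (by simpa using hk)
          | succ m ih =>
            intro k hk
            rcases le_or_gt (-(m:ℤ)) k with h' | h'
            · exact ih k h'
            · have hs := icss_shift hp hu hu h1 k
              have hmono : {k' : ℤ | ∃ l ∈ {x : ℤ | 1 ≤ x}, k' = l + k} ⊆
                  {k' : ℤ | -(m:ℤ) ≤ k'} := by
                rintro k' ⟨l, hl, rfl⟩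
                simp only [Set.mem_setOf_eq] at hl ⊢
                omega
              have hs' := icss_mono hmono hs
              exact icss_trans hp hu (memWt_shift hp hu k) hs' (fun k' hk'' => ih k' hk'')
        intro k
        rcases le_or_gt 0 k with h' | h'
        · exact icss_single hp h'
        · exact main k.natAbs k (by omega)
      exact icss_trans hp hu hv hvuniv (fun k _ => key k)

end Stmt1Aux

/-- For `1 ≤ p < ∞`, `β ∈ ℝ` and `u ∈ ℓ^p_β(ℤ)`, the closed linear span of
`{S_k u : k ≥ 0}` equals the closed linear span of `{S_k u : k ∈ ℤ}` if and only if `u`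
belongs to the closed linear span of `{S_k u : k ≥ 1}`. -/
theorem stmt1 (p β : ℝ) (hp : 1 ≤ p) (u : ℤ → ℂ) (hu : MemWt p β u) :
    (∀ v : ℤ → ℂ, MemWt p β v →
        (InClosedSpanShifts p β {k : ℤ | 0 ≤ k} u v ↔
          InClosedSpanShifts p β Set.univ u v)) ↔
      InClosedSpanShifts p β {k : ℤ | 1 ≤ k} u u :=
  Stmt1Aux.stmt1' p β hp u hu
end
end

section
/- Let 1 ≤ p < ∞, β ∈ ℝ and u ∈ ℓ^p_β(ℤ). Then u is cyclic in ℓ^p_β(ℤ) if and only if there exist finitely supported sequences a_j : ℤ → ℂ and finitely supported sequences b_j : ℤ → ℂ with b_j(n) = 0 for all n ≤ 0, such that ‖e_0 − a_j ∗ u‖_{p,β} → 0 and ‖u − b_j ∗ u‖_{p,β} → 0 as j → ∞, where e_0 is the sequence equal to 1 at index 0 and 0 elsewhere. -/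
open MeasureTheory Filter Set Complex

noncomputable section

namespace Stmt2Aux

variable {p β : ℝ}

lemma wt1 (n : ℤ) : (1:ℝ) ≤ 1 + n.natAbs := le_add_of_nonneg_right (by positivity)

lemma key_rpow {a b c : ℝ} (ha : 1 ≤ a) (hb : 1 ≤ b) (hc : 1 ≤ c)
    (h1 : a ≤ b * c) (h2 : c ≤ a * b) (t : ℝ) :
    a ^ t ≤ b ^ |t| * c ^ t := by
  have ha0 : (0:ℝ) < a := lt_of_lt_of_le one_pos ha
  have hb0 : (0:ℝ) < b := lt_of_lt_of_le one_pos hb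
  have hc0 : (0:ℝ) < c := lt_of_lt_of_le one_pos hc
  rcases le_or_gt 0 t with ht | ht
  · rw [_root_.abs_of_nonneg ht]
    calc a ^ t ≤ (b * c) ^ t := Real.rpow_le_rpow ha0.le h1 ht
    _ = b ^ t * c ^ t := Real.mul_rpow hb0.le hc0.le
  · rw [_root_.abs_of_neg ht]
    have h3 : (a * b) ^ t ≤ c ^ t := Real.rpow_le_rpow_of_nonpos hc0 h2 ht.le
    rw [Real.mul_rpow ha0.le hb0.le] at h3
    have hbt : (0:ℝ) < b ^ t := Real.rpow_pos_of_pos hb0 t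
    have h4 : a ^ t ≤ c ^ t / b ^ t := (le_div_iff₀ hbt).mpr h3
    calc a ^ t ≤ c ^ t / b ^ t := h4
    _ = b ^ (-t) * c ^ t := by rw [Real.rpow_neg hb0.le]; ring

def Phi (β : ℝ) (f : ℤ → ℂ) : ℤ → ℝ := fun n => ‖f n‖ * (1 + (n.natAbs : ℝ)) ^ β

lemma Phi_nonneg {f : ℤ → ℂ} {n : ℤ} : 0 ≤ Phi β f n :=
  mul_nonneg (norm_nonneg _) (Real.rpow_nonneg (by positivity) _)

lemma Phi_rpow (f : ℤ → ℂ) (n : ℤ) :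
    Phi β f n ^ p = ‖f n‖ ^ p * (1 + (n.natAbs : ℝ)) ^ (p * β) := by
  have h0 : (0:ℝ) ≤ 1 + n.natAbs := by positivity
  rw [Phi, Real.mul_rpow (norm_nonneg _) (Real.rpow_nonneg h0 _), ← Real.rpow_mul h0,
    mul_comm β p]

lemma memWt_iff_phi (f : ℤ → ℂ) : MemWt p β f ↔ Summable fun n => Phi β f n ^ p :=
  summable_congr fun n => (Phi_rpow f n).symm

lemma wtNorm_eq_phi (f : ℤ → ℂ) : wtNorm p β f = (∑' n, Phi β f n ^ p) ^ (1/p) := by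
  unfold wtNorm
  congr 1
  exact tsum_congr fun n => (Phi_rpow f n).symm

lemma wtNorm_nonneg (f : ℤ → ℂ) : 0 ≤ wtNorm p β f :=
  Real.rpow_nonneg (tsum_nonneg fun n => by positivity) _

lemma wtNorm_zero (hp : 1 ≤ p) : wtNorm p β (fun _ => (0:ℂ)) = 0 := by
  have hp0 : p ≠ 0 := by linarith
  simp only [wtNorm, norm_zero, Real.zero_rpow hp0, zero_mul, tsum_zero]
  exact Real.zero_rpow (one_div_ne_zero hp0)


-- new material
lemma Phi_add_le (f g : ℤ → ℂ) (n : ℤ) :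
    Phi β (fun n => f n + g n) n ≤ Phi β f n + Phi β g n := by
  have : Phi β (fun n => f n + g n) n = ‖f n + g n‖ * (1 + (n.natAbs : ℝ)) ^ β := rfl
  rw [this, Phi, Phi, ← add_mul]
  exact mul_le_mul_of_nonneg_right (norm_add_le _ _) (Real.rpow_nonneg (by positivity) _)

lemma MemWt.add' (hp : 1 ≤ p) {f g : ℤ → ℂ} (hf : MemWt p β f) (hg : MemWt p β g) :
    MemWt p β (fun n => f n + g n) := by
  rw [memWt_iff_phi] at hf hg ⊢
  refine Summable.of_nonneg_of_le (fun n => Real.rpow_nonneg Phi_nonneg p) (fun n => ?_)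
    (Real.summable_Lp_add_of_nonneg hp (fun n => Phi_nonneg) (fun n => Phi_nonneg) hf hg)
  exact Real.rpow_le_rpow Phi_nonneg (Phi_add_le f g n) (by linarith)

lemma wtNorm_add_le (hp : 1 ≤ p) {f g : ℤ → ℂ} (hf : MemWt p β f) (hg : MemWt p β g) :
    wtNorm p β (fun n => f n + g n) ≤ wtNorm p β f + wtNorm p β g := by
  have hsum := (memWt_iff_phi (β := β) (fun n => f n + g n)).1 (MemWt.add' hp hf hg)
  have hf' := (memWt_iff_phi f).1 hf
  have hg' := (memWt_iff_phi g).1 hg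
  rw [wtNorm_eq_phi, wtNorm_eq_phi, wtNorm_eq_phi]
  have key := Real.Lp_add_le_tsum_of_nonneg' hp (fun n => Phi_nonneg (f := f))
    (fun n => Phi_nonneg (f := g)) hf' hg'
  refine le_trans ?_ key
  refine Real.rpow_le_rpow (tsum_nonneg fun n => Real.rpow_nonneg Phi_nonneg p) ?_
    (by positivity)
  refine Summable.tsum_le_tsum (fun n => ?_) hsum
    (Real.summable_Lp_add_of_nonneg hp (fun n => Phi_nonneg) (fun n => Phi_nonneg) hf' hg')
  exact Real.rpow_le_rpow Phi_nonneg (Phi_add_le f g n) (by linarith)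

lemma MemWt.smul' {f : ℤ → ℂ} (c : ℂ) (hf : MemWt p β f) :
    MemWt p β (fun n => c * f n) := by
  refine (hf.mul_left (‖c‖ ^ p)).congr fun n => ?_
  rw [norm_mul, Real.mul_rpow (norm_nonneg c) (norm_nonneg _)]
  ring

lemma wtNorm_smul (hp : 1 ≤ p) (c : ℂ) (f : ℤ → ℂ) :
    wtNorm p β (fun n => c * f n) = ‖c‖ * wtNorm p β f := by
  have hp0 : p ≠ 0 := by linarith
  unfold wtNorm
  have h : ∀ n : ℤ, ‖c * f n‖ ^ p * (1 + (n.natAbs : ℝ)) ^ (p * β)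
      = ‖c‖ ^ p * (‖f n‖ ^ p * (1 + (n.natAbs : ℝ)) ^ (p * β)) := by
    intro n
    rw [norm_mul, Real.mul_rpow (norm_nonneg c) (norm_nonneg _)]
    ring
  rw [tsum_congr h, tsum_mul_left,
    Real.mul_rpow (Real.rpow_nonneg (norm_nonneg c) p) (tsum_nonneg fun n => by positivity),
    ← Real.rpow_mul (norm_nonneg c), mul_one_div_cancel hp0, Real.rpow_one]

lemma MemWt.sub' (hp : 1 ≤ p) {f g : ℤ → ℂ} (hf : MemWt p β f) (hg : MemWt p β g) :
    MemWt p β (fun n => f n - g n) := by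
  refine (MemWt.add' hp hf (MemWt.smul' (-1) hg)).congr fun n => ?_
  simp [sub_eq_add_neg]

lemma wt_key (hp0 : 0 ≤ p) (m n : ℤ) :
    (1 + (n.natAbs:ℝ)) ^ (p * β)
      ≤ (1 + (m.natAbs:ℝ)) ^ (p * |β|) * (1 + ((n - m).natAbs:ℝ)) ^ (p * β) := by
  have h1 : (1 + (n.natAbs:ℝ)) ≤ (1 + (m.natAbs:ℝ)) * (1 + ((n - m).natAbs:ℝ)) := by
    have hle : (n.natAbs : ℝ) ≤ (m.natAbs : ℝ) + ((n - m).natAbs : ℝ) := by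
      have : n.natAbs ≤ m.natAbs + (n - m).natAbs := by omega
      exact_mod_cast this
    nlinarith [Nat.cast_nonneg (α := ℝ) m.natAbs, Nat.cast_nonneg (α := ℝ) (n - m).natAbs]
  have h2 : (1 + ((n - m).natAbs:ℝ)) ≤ (1 + (n.natAbs:ℝ)) * (1 + (m.natAbs:ℝ)) := by
    have hle : ((n - m).natAbs : ℝ) ≤ (n.natAbs : ℝ) + (m.natAbs : ℝ) := by
      have : (n - m).natAbs ≤ n.natAbs + m.natAbs := by omega
      exact_mod_cast this
    nlinarith [Nat.cast_nonneg (α := ℝ) m.natAbs, Nat.cast_nonneg (α := ℝ) n.natAbs]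
  have h := key_rpow (wt1 n) (wt1 m) (wt1 (n - m)) h1 h2 (p * β)
  rwa [abs_mul, _root_.abs_of_nonneg hp0] at h

lemma MemWt.shift (hp : 1 ≤ p) {f : ℤ → ℂ} (hf : MemWt p β f) (m : ℤ) :
    MemWt p β (fun n => f (n - m)) := by
  have hp0 : (0:ℝ) ≤ p := by linarith
  have hbase : Summable (fun n : ℤ =>
      ‖f (n - m)‖ ^ p * (1 + ((n - m).natAbs : ℝ)) ^ (p * β)) :=
    ((Equiv.subRight m).summable_iff
      (f := fun k : ℤ => ‖f k‖ ^ p * (1 + (k.natAbs : ℝ)) ^ (p * β))).mpr hf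
  have hsum := hbase.mul_left ((1 + (m.natAbs:ℝ)) ^ (p * |β|))
  refine hsum.of_nonneg_of_le (fun n => by positivity) (fun n => ?_)
  calc ‖f (n - m)‖ ^ p * (1 + (n.natAbs : ℝ)) ^ (p * β)
      ≤ ‖f (n - m)‖ ^ p * ((1 + (m.natAbs:ℝ)) ^ (p * |β|)
          * (1 + ((n - m).natAbs : ℝ)) ^ (p * β)) :=
        mul_le_mul_of_nonneg_left (wt_key hp0 m n) (Real.rpow_nonneg (norm_nonneg _) p)
    _ = (1 + (m.natAbs:ℝ)) ^ (p * |β|)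
          * (‖f (n - m)‖ ^ p * (1 + ((n - m).natAbs : ℝ)) ^ (p * β)) := by ring

lemma wtNorm_shift_le (hp : 1 ≤ p) {f : ℤ → ℂ} (hf : MemWt p β f) (m : ℤ) :
    wtNorm p β (fun n => f (n - m)) ≤ (1 + (m.natAbs:ℝ)) ^ |β| * wtNorm p β f := by
  have hp0 : (0:ℝ) < p := lt_of_lt_of_le one_pos hp
  set C : ℝ := (1 + (m.natAbs:ℝ)) ^ (p * |β|) with hC
  have hC0 : (0:ℝ) ≤ C := Real.rpow_nonneg (by positivity) _
  have hbase : Summable (fun n : ℤ =>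
      ‖f (n - m)‖ ^ p * (1 + ((n - m).natAbs : ℝ)) ^ (p * β)) :=
    ((Equiv.subRight m).summable_iff
      (f := fun k : ℤ => ‖f k‖ ^ p * (1 + (k.natAbs : ℝ)) ^ (p * β))).mpr hf
  have hshift := MemWt.shift hp hf m
  have h1 : (∑' n : ℤ, ‖f (n - m)‖ ^ p * (1 + (n.natAbs : ℝ)) ^ (p * β))
      ≤ C * ∑' n : ℤ, ‖f n‖ ^ p * (1 + (n.natAbs : ℝ)) ^ (p * β) := by
    have e1 : (∑' n : ℤ, ‖f (n - m)‖ ^ p * (1 + ((n - m).natAbs : ℝ)) ^ (p * β))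
        = ∑' n : ℤ, ‖f n‖ ^ p * (1 + (n.natAbs : ℝ)) ^ (p * β) :=
      (Equiv.subRight m).tsum_eq (fun k : ℤ => ‖f k‖ ^ p * (1 + (k.natAbs : ℝ)) ^ (p * β))
    calc (∑' n : ℤ, ‖f (n - m)‖ ^ p * (1 + (n.natAbs : ℝ)) ^ (p * β))
        ≤ ∑' n : ℤ, C * (‖f (n - m)‖ ^ p * (1 + ((n - m).natAbs : ℝ)) ^ (p * β)) := by
          refine Summable.tsum_le_tsum (fun n => ?_) hshift (hbase.mul_left C)
          calc ‖f (n - m)‖ ^ p * (1 + (n.natAbs : ℝ)) ^ (p * β)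
              ≤ ‖f (n - m)‖ ^ p * (C * (1 + ((n - m).natAbs : ℝ)) ^ (p * β)) :=
                mul_le_mul_of_nonneg_left (wt_key hp0.le m n)
                  (Real.rpow_nonneg (norm_nonneg _) p)
            _ = C * (‖f (n - m)‖ ^ p * (1 + ((n - m).natAbs : ℝ)) ^ (p * β)) := by ring
      _ = C * ∑' n : ℤ, ‖f (n - m)‖ ^ p * (1 + ((n - m).natAbs : ℝ)) ^ (p * β) :=
          tsum_mul_left
      _ = C * ∑' n : ℤ, ‖f n‖ ^ p * (1 + (n.natAbs : ℝ)) ^ (p * β) := by rw [e1]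
  unfold wtNorm
  calc (∑' n : ℤ, ‖f (n - m)‖ ^ p * (1 + (n.natAbs : ℝ)) ^ (p * β)) ^ (1/p)
      ≤ (C * ∑' n : ℤ, ‖f n‖ ^ p * (1 + (n.natAbs : ℝ)) ^ (p * β)) ^ (1/p) :=
        Real.rpow_le_rpow (tsum_nonneg fun n => by positivity) h1 (by positivity)
    _ = C ^ (1/p) * (∑' n : ℤ, ‖f n‖ ^ p * (1 + (n.natAbs : ℝ)) ^ (p * β)) ^ (1/p) :=
        Real.mul_rpow hC0 (tsum_nonneg fun n => by positivity)
    _ = (1 + (m.natAbs:ℝ)) ^ |β|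
          * (∑' n : ℤ, ‖f n‖ ^ p * (1 + (n.natAbs : ℝ)) ^ (p * β)) ^ (1/p) := by
        rw [hC, ← Real.rpow_mul (by positivity)]
        congr 2
        field_simp

lemma memWt_of_finset (hp : 1 ≤ p) (s : Finset ℤ) {f : ℤ → ℂ} (h : ∀ n ∉ s, f n = 0) :
    MemWt p β f := by
  have hp0 : p ≠ 0 := by linarith
  refine summable_of_ne_finset_zero (s := s) fun n hn => ?_
  rw [h n hn]
  simp [Real.zero_rpow hp0]


-- new: convolution lemmas
lemma convFin_apply (a : ℤ →₀ ℂ) (u : ℤ → ℂ) (n : ℤ) :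
    convFin a u n = a.sum (fun k c => c * u (n - k)) := rfl

lemma convFin_zero (u : ℤ → ℂ) : convFin 0 u = fun _ => 0 :=
  funext fun n => by simp [convFin]

lemma convFin_add (a b : ℤ →₀ ℂ) (u : ℤ → ℂ) (n : ℤ) :
    convFin (a + b) u n = convFin a u n + convFin b u n := by
  simp only [convFin_apply]
  exact Finsupp.sum_add_index' (fun k => zero_mul _) (fun k c d => add_mul c d _)

lemma convFin_single (k : ℤ) (c : ℂ) (u : ℤ → ℂ) (n : ℤ) :
    convFin (Finsupp.single k c) u n = c * u (n - k) := by
  simp only [convFin_apply]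
  exact Finsupp.sum_single_index (zero_mul _)

lemma convFin_mapDomain (m : ℤ) (a : ℤ →₀ ℂ) (u : ℤ → ℂ) (n : ℤ) :
    convFin (Finsupp.mapDomain (· + m) a) u n = convFin a u (n - m) := by
  simp only [convFin_apply]
  rw [Finsupp.sum_mapDomain_index (fun k => zero_mul (u (n - k))) (fun k c d => add_mul c d (u (n - k)))]
  refine Finsupp.sum_congr fun k _ => ?_
  congr 1
  ring

lemma convFin_smul (c : ℂ) (a : ℤ →₀ ℂ) (u : ℤ → ℂ) (n : ℤ) :
    convFin (c • a) u n = c * convFin a u n := by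
  unfold convFin
  rw [Finset.mul_sum]
  rw [Finset.sum_subset (Finsupp.support_smul (b := c) (g := a))
    (fun k _ hk => by rw [Finsupp.notMem_support_iff.1 hk, zero_mul])]
  refine Finset.sum_congr rfl fun k _ => ?_
  rw [Finsupp.smul_apply, smul_eq_mul, mul_assoc]

lemma memWt_convFin (hp : 1 ≤ p) {u : ℤ → ℂ} (hu : MemWt p β u) (a : ℤ →₀ ℂ) :
    MemWt p β (convFin a u) := by
  induction a using Finsupp.induction with
  | zero =>
    rw [convFin_zero]
    exact memWt_of_finset hp ∅ (fun n _ => rfl)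
  | single_add k c a hka hc ih =>
    have hrw : convFin (Finsupp.single k c + a) u = fun n => c * u (n - k) + convFin a u n :=
      funext fun n => by rw [convFin_add, convFin_single]
    rw [hrw]
    exact MemWt.add' hp (MemWt.smul' c (MemWt.shift hp hu k)) ih

def MGood (p β : ℝ) (u v : ℤ → ℂ) : Prop :=
  MemWt p β v ∧ InClosedSpanShifts p β {k : ℤ | 0 ≤ k} u v

lemma mgood_zero (hp : 1 ≤ p) (u : ℤ → ℂ) : MGood p β u (fun _ => 0) := by
  refine ⟨memWt_of_finset hp ∅ (fun n _ => rfl), fun ε hε => ⟨0, by simp, ?_⟩⟩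
  have : (fun n => (0:ℂ) - convFin 0 u n) = fun _ => (0:ℂ) :=
    funext fun n => by simp [convFin]
  rw [this, wtNorm_zero hp]
  exact hε

lemma mgood_add (hp : 1 ≤ p) {u v w : ℤ → ℂ} (hu : MemWt p β u)
    (hv : MGood p β u v) (hw : MGood p β u w) : MGood p β u (fun n => v n + w n) := by
  refine ⟨MemWt.add' hp hv.1 hw.1, fun ε hε => ?_⟩
  obtain ⟨a, hasupp, haerr⟩ := hv.2 (ε/2) (by linarith)
  obtain ⟨b, hbsupp, hberr⟩ := hw.2 (ε/2) (by linarith)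
  refine ⟨a + b, fun k hk => ?_, ?_⟩
  · rw [Finsupp.add_apply] at hk
    by_cases h1 : a k = 0
    · exact hbsupp k (by simpa [h1] using hk)
    · exact hasupp k h1
  · have hrw : (fun n => (v n + w n) - convFin (a + b) u n)
        = fun n => (v n - convFin a u n) + (w n - convFin b u n) :=
      funext fun n => by rw [convFin_add]; ring
    rw [hrw]
    have h := wtNorm_add_le hp (MemWt.sub' hp hv.1 (memWt_convFin hp hu a))
      (MemWt.sub' hp hw.1 (memWt_convFin hp hu b))
    linarith

lemma mgood_smul (hp : 1 ≤ p) {u v : ℤ → ℂ} (hu : MemWt p β u) (c : ℂ)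
    (hv : MGood p β u v) : MGood p β u (fun n => c * v n) := by
  refine ⟨MemWt.smul' c hv.1, fun ε hε => ?_⟩
  obtain ⟨a, hasupp, haerr⟩ := hv.2 (ε / (‖c‖ + 1)) (by positivity)
  refine ⟨c • a, fun k hk => ?_, ?_⟩
  · refine hasupp k fun h0 => ?_
    rw [Finsupp.smul_apply, h0, smul_zero] at hk
    exact hk rfl
  · have hrw : (fun n => c * v n - convFin (c • a) u n)
        = fun n => c * (v n - convFin a u n) :=
      funext fun n => by rw [convFin_smul]; ring
    rw [hrw, wtNorm_smul hp]
    have h0 : (0:ℝ) ≤ ‖c‖ := norm_nonneg c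
    have h1 : 0 ≤ wtNorm p β (fun n => v n - convFin a u n) := wtNorm_nonneg _
    have h2 : (‖c‖ + 1) * wtNorm p β (fun n => v n - convFin a u n) < ε := by
      rw [mul_comm, ← lt_div_iff₀ (by positivity)]
      exact haerr
    nlinarith

lemma mgood_shift_nonneg (hp : 1 ≤ p) {u : ℤ → ℂ} (hu : MemWt p β u) {k : ℤ} (hk : 0 ≤ k) :
    MGood p β u (fun n => u (n - k)) := by
  refine ⟨MemWt.shift hp hu k, fun ε hε => ⟨Finsupp.single k 1, fun j hj => ?_, ?_⟩⟩
  · have : j = k := by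
      by_contra hne
      exact hj (Finsupp.single_eq_of_ne' fun h => hne h.symm)
    rw [this]; exact hk
  · have hrw : (fun n => u (n - k) - convFin (Finsupp.single k 1) u n) = fun _ => (0:ℂ) :=
      funext fun n => by rw [convFin_single, one_mul, sub_self]
    rw [hrw, wtNorm_zero hp]
    exact hε

lemma mgood_conv (hp : 1 ≤ p) {u : ℤ → ℂ} (hu : MemWt p β u) (a : ℤ →₀ ℂ)
    (h : ∀ k, a k ≠ 0 → MGood p β u (fun n => u (n - k))) : MGood p β u (convFin a u) := by
  induction a using Finsupp.induction with
  | zero =>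
    rw [convFin_zero]
    exact mgood_zero hp u
  | single_add k c a hka hc ih =>
    have hrw : convFin (Finsupp.single k c + a) u = fun n => c * u (n - k) + convFin a u n :=
      funext fun n => by rw [convFin_add, convFin_single]
    rw [hrw]
    have hak : a k = 0 := Finsupp.notMem_support_iff.1 hka
    have hk : MGood p β u (fun n => u (n - k)) := by
      refine h k ?_
      rw [Finsupp.add_apply, Finsupp.single_eq_same, hak, add_zero]
      exact hc
    refine mgood_add hp hu (mgood_smul hp hu c hk) (ih fun j hj => h j ?_)
    have hjk : j ≠ k := fun e => hj (e ▸ hak)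
    rw [Finsupp.add_apply, Finsupp.single_eq_of_ne' fun e => hjk e.symm, zero_add]
    exact hj

lemma mgood_lim (hp : 1 ≤ p) {u v : ℤ → ℂ} (hu : MemWt p β u) (hv : MemWt p β v)
    (h : ∀ ε : ℝ, 0 < ε → ∃ w, MGood p β u w ∧ wtNorm p β (fun n => v n - w n) < ε) :
    MGood p β u v := by
  refine ⟨hv, fun ε hε => ?_⟩
  obtain ⟨w, hw, hvw⟩ := h (ε/2) (by linarith)
  obtain ⟨a, hasupp, haerr⟩ := hw.2 (ε/2) (by linarith)
  refine ⟨a, hasupp, ?_⟩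
  have hrw : (fun n => v n - convFin a u n)
      = fun n => (v n - w n) + (w n - convFin a u n) := funext fun n => by ring
  rw [hrw]
  have hle := wtNorm_add_le hp (MemWt.sub' hp hv hw.1)
    (MemWt.sub' hp hw.1 (memWt_convFin hp hu a))
  linarith

lemma mgood_sum (hp : 1 ≤ p) {u : ℤ → ℂ} (hu : MemWt p β u) (s : Finset ℤ)
    (F : ℤ → ℤ → ℂ) (h : ∀ i ∈ s, MGood p β u (F i)) :
    MGood p β u (fun n => ∑ i ∈ s, F i n) := by
  classical
  revert h
  induction s using Finset.induction_on with
  | empty =>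
    intro _
    have : (fun n : ℤ => ∑ i ∈ (∅ : Finset ℤ), F i n) = fun _ => (0:ℂ) :=
      funext fun n => Finset.sum_empty
    rw [this]
    exact mgood_zero hp u
  | insert x t hx ih =>
    intro h
    have : (fun n : ℤ => ∑ i ∈ insert x t, F i n) = fun n => F x n + ∑ i ∈ t, F i n :=
      funext fun n => Finset.sum_insert hx
    rw [this]
    exact mgood_add hp hu (h x (Finset.mem_insert_self x t))
      (ih fun i hi => h i (Finset.mem_insert_of_mem hi))


lemma memWt_e0 (hp : 1 ≤ p) : MemWt p β e0 :=
  memWt_of_finset hp {0} fun n hn => by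
    simp only [Finset.mem_singleton] at hn
    simp [e0, hn]

end Stmt2Aux

open Stmt2Aux

/-- For `1 ≤ p < ∞`, `β ∈ ℝ` and `u ∈ ℓ^p_β(ℤ)`, `u` is cyclic in `ℓ^p_β(ℤ)`
iff there are finitely supported sequences `a j` and finitely supported sequences `b j`
vanishing at all indices `≤ 0` with `‖e₀ - a j ∗ u‖_{p,β} → 0` and `‖u - b j ∗ u‖_{p,β} → 0`. -/
theorem stmt2 (p β : ℝ) (hp : 1 ≤ p) (u : ℤ → ℂ) (hu : MemWt p β u) :
    IsCyclicIn p β u ↔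
      ∃ a b : ℕ → (ℤ →₀ ℂ),
        (∀ j : ℕ, ∀ k : ℤ, k ≤ 0 → b j k = 0) ∧
        Filter.Tendsto (fun j : ℕ => wtNorm p β (fun n => e0 n - convFin (a j) u n))
          Filter.atTop (nhds 0) ∧
        Filter.Tendsto (fun j : ℕ => wtNorm p β (fun n => u n - convFin (b j) u n))
          Filter.atTop (nhds 0) := by
  constructor
  · rintro ⟨hmem, hspan⟩
    have he0 : MemWt p β e0 := memWt_e0 hp
    set C : ℝ := (1 + ((1:ℤ).natAbs : ℝ)) ^ |β| with hCdef
    have hC0 : (0:ℝ) < C := Real.rpow_pos_of_pos (by norm_num) _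
    have hv : MemWt p β (fun n => u (n + 1)) := by
      have h := MemWt.shift hp hmem (-1)
      simpa [sub_neg_eq_add] using h
    choose a ha using fun j : ℕ => hspan e0 he0 (1 / (j+1)) (by positivity)
    choose a' ha' using fun j : ℕ =>
      hspan (fun n => u (n + 1)) hv (1 / ((j+1) * C)) (by positivity)
    refine ⟨a, fun j => Finsupp.mapDomain (· + 1) (a' j), ?_, ?_, ?_⟩
    · intro j k hkle
      by_contra hk
      have hk' : k ∈ (Finsupp.mapDomain (· + 1) (a' j)).support :=
        Finsupp.mem_support_iff.2 hk
      obtain ⟨k₀, hk₀, rfl⟩ := Finset.mem_image.1 (Finsupp.mapDomain_support hk')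
      have h0 : (0:ℤ) ≤ k₀ := (ha' j).1 k₀ (Finsupp.mem_support_iff.1 hk₀)
      omega
    · exact squeeze_zero (fun j => wtNorm_nonneg _) (fun j => le_of_lt (ha j).2)
        tendsto_one_div_add_atTop_nhds_zero_nat
    · refine squeeze_zero (fun j => wtNorm_nonneg _) (fun j => ?_)
        tendsto_one_div_add_atTop_nhds_zero_nat
      have herrmem : MemWt p β (fun n => u (n + 1) - convFin (a' j) u n) :=
        MemWt.sub' hp hv (memWt_convFin hp hmem (a' j))
      have hrw : (fun n => u n - convFin (Finsupp.mapDomain (· + 1) (a' j)) u n)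
          = fun n => (fun m => u (m + 1) - convFin (a' j) u m) (n - 1) := by
        funext n
        rw [convFin_mapDomain]
        show u n - convFin (a' j) u (n - 1) = u ((n - 1) + 1) - convFin (a' j) u (n - 1)
        have h1 : n - 1 + 1 = n := by ring
        rw [h1]
      calc wtNorm p β (fun n => u n - convFin (Finsupp.mapDomain (· + 1) (a' j)) u n)
          = wtNorm p β (fun n => (fun m => u (m + 1) - convFin (a' j) u m) (n - 1)) := by
            rw [hrw]
        _ ≤ C * wtNorm p β (fun m => u (m + 1) - convFin (a' j) u m) :=
            wtNorm_shift_le hp herrmem 1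
        _ ≤ C * (1 / ((j+1) * C)) :=
            mul_le_mul_of_nonneg_left (le_of_lt (ha' j).2) hC0.le
        _ = 1 / (j+1) := by field_simp
  · rintro ⟨a, b, hbsupp, ha, hb⟩
    refine ⟨hu, fun v hv => ?_⟩
    have he0 : MemWt p β e0 := memWt_e0 hp
    -- all negative shifts of u are in the closed span
    have step1 : ∀ m : ℕ, ∀ i : ℕ, i ≤ m → MGood p β u (fun n => u (n + (i:ℤ))) := by
      intro m
      induction m with
      | zero =>
        intro i hi
        have : i = 0 := Nat.le_zero.1 hi
        subst this
        have h := mgood_shift_nonneg (β := β) hp hu (k := 0) le_rfl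
        have hrw : (fun n : ℤ => u (n - 0)) = fun n : ℤ => u (n + ((0:ℕ):ℤ)) := by
          funext n; congr 1 <;> omega
        rwa [hrw] at h
      | succ m ihm =>
        intro i hi
        rcases Nat.lt_succ_iff_lt_or_eq.1 (Nat.lt_succ_of_le hi) with h | rfl
        · exact ihm i (Nat.lt_succ_iff.1 (by omega))
        · -- i = m + 1
          set m' : ℤ := -((m:ℤ) + 1) with hm'
          set C' : ℝ := (1 + (m'.natAbs : ℝ)) ^ |β| with hC'
          have hC'0 : (0:ℝ) < C' := Real.rpow_pos_of_pos (by positivity) _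
          refine mgood_lim hp hu ?_ ?_
          · have h := MemWt.shift hp hu m'
            have hrw : (fun n : ℤ => u (n - m')) = fun n : ℤ => u (n + ((m:ℤ)+1)) := by
              funext n; congr 1 <;> omega
            rw [hrw] at h
            have : (fun n : ℤ => u (n + (((m+1:ℕ)):ℤ))) = fun n : ℤ => u (n + ((m:ℤ)+1)) := by
              funext n; congr 1 <;> omega
            rwa [this]
          · intro ε hε
            obtain ⟨j, hj⟩ := (hb.eventually_lt_const (show (0:ℝ) < ε / C' by positivity)).exists
            refine ⟨convFin (Finsupp.mapDomain (· + m') (b j)) u, ?_, ?_⟩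
            · refine mgood_conv hp hu _ fun k hk => ?_
              obtain ⟨k₀, hk₀, rfl⟩ := Finset.mem_image.1
                (Finsupp.mapDomain_support (Finsupp.mem_support_iff.2 hk))
              have hk₀1 : (1:ℤ) ≤ k₀ := by
                by_contra hlt
                exact Finsupp.mem_support_iff.1 hk₀ (hbsupp j k₀ (by omega))
              rcases le_or_gt 0 (k₀ + m') with hnn | hneg
              · exact mgood_shift_nonneg hp hu hnn
              · have hge : -((m:ℤ)) ≤ k₀ + m' := by omega
                have h := ihm ((-(k₀ + m')).toNat) (by omega)
                have hrw : (fun n : ℤ => u (n + (((-(k₀ + m')).toNat : ℕ) : ℤ)))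
                    = fun n : ℤ => u (n - (k₀ + m')) := by
                  funext n; congr 1 <;> omega
                rwa [hrw] at h
            · have herrmem : MemWt p β (fun n => u n - convFin (b j) u n) :=
                MemWt.sub' hp hu (memWt_convFin hp hu (b j))
              have hrw : (fun n => u (n + (((m+1:ℕ)):ℤ))
                    - convFin (Finsupp.mapDomain (· + m') (b j)) u n)
                  = fun n => (fun k => u k - convFin (b j) u k) (n - m') := by
                funext n
                rw [convFin_mapDomain]
                show u (n + (((m+1:ℕ)):ℤ)) - convFin (b j) u (n - m')
                    = u (n - m') - convFin (b j) u (n - m')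
                have h2 : n + (((m+1:ℕ)):ℤ) = n - m' := by omega
                rw [h2]
              rw [hrw]
              calc wtNorm p β (fun n => (fun k => u k - convFin (b j) u k) (n - m'))
                  ≤ C' * wtNorm p β (fun k => u k - convFin (b j) u k) :=
                    wtNorm_shift_le hp herrmem m'
                _ < C' * (ε / C') := by
                    exact mul_lt_mul_of_pos_left hj hC'0
                _ = ε := by field_simp
    have step2 : ∀ k : ℤ, MGood p β u (fun n => u (n - k)) := by
      intro k
      rcases le_or_gt 0 k with hk | hk
      · exact mgood_shift_nonneg hp hu hk
      · have h := step1 ((-k).toNat) ((-k).toNat) le_rfl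
        have hrw : (fun n : ℤ => u (n + (((-k).toNat : ℕ) : ℤ))) = fun n : ℤ => u (n - k) := by
          funext n; congr 1 <;> omega
        rwa [hrw] at h
    -- all shifts of e0 are in the closed span
    have step4 : ∀ m : ℤ, MGood p β u (fun n => e0 (n - m)) := by
      intro m
      set Cm : ℝ := (1 + (m.natAbs : ℝ)) ^ |β| with hCm
      have hCm0 : (0:ℝ) < Cm := Real.rpow_pos_of_pos (by positivity) _
      refine mgood_lim hp hu (MemWt.shift hp he0 m) fun ε hε => ?_
      obtain ⟨j, hj⟩ := (ha.eventually_lt_const (show (0:ℝ) < ε / Cm by positivity)).exists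
      refine ⟨convFin (Finsupp.mapDomain (· + m) (a j)) u,
        mgood_conv hp hu _ (fun k _ => step2 k), ?_⟩
      have herrmem : MemWt p β (fun n => e0 n - convFin (a j) u n) :=
        MemWt.sub' hp he0 (memWt_convFin hp hu (a j))
      have hrw : (fun n => e0 (n - m) - convFin (Finsupp.mapDomain (· + m) (a j)) u n)
          = fun n => (fun k => e0 k - convFin (a j) u k) (n - m) := by
        funext n
        rw [convFin_mapDomain]
      rw [hrw]
      calc wtNorm p β (fun n => (fun k => e0 k - convFin (a j) u k) (n - m))
          ≤ Cm * wtNorm p β (fun k => e0 k - convFin (a j) u k) :=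
            wtNorm_shift_le hp herrmem m
        _ < Cm * (ε / Cm) := mul_lt_mul_of_pos_left hj hCm0
        _ = ε := by field_simp
    -- conclude
    have hfinal : MGood p β u v := by
      refine mgood_lim hp hu hv fun ε hε => ?_
      have hεp : (0:ℝ) < ε ^ p := Real.rpow_pos_of_pos hε p
      have htail := tendsto_tsum_compl_atTop_zero
        (fun n : ℤ => ‖v n‖ ^ p * (1 + (n.natAbs : ℝ)) ^ (p * β))
      obtain ⟨s, hs⟩ := (htail.eventually_lt_const hεp).exists
      set vs : ℤ → ℂ := fun n => if n ∈ s then v n else 0 with hvs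
      refine ⟨vs, ?_, ?_⟩
      · have hgood : MGood p β u (fun n => ∑ m ∈ s, v m * e0 (n - m)) :=
          mgood_sum hp hu s (fun m => fun n => v m * e0 (n - m))
            (fun m _ => mgood_smul hp hu (v m) (step4 m))
        have hrw : (fun n => ∑ m ∈ s, v m * e0 (n - m)) = vs := by
          funext n
          rw [hvs]
          calc ∑ m ∈ s, v m * e0 (n - m) = ∑ m ∈ s, if m = n then v m else 0 := by
                refine Finset.sum_congr rfl fun m _ => ?_
                by_cases h : m = n
                · subst h; simp [e0]
                · have hne : n - m ≠ 0 := by omega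
                  simp [e0, hne, h]
            _ = if n ∈ s then v n else 0 := Finset.sum_ite_eq' s n v
        rwa [hrw] at hgood
      · have hp0 : p ≠ 0 := by linarith
        have heq : wtNorm p β (fun n => v n - vs n)
            = (∑' n : ℤ, (if n ∈ s then 0 else ‖v n‖ ^ p * (1 + (n.natAbs : ℝ)) ^ (p * β))) ^ (1/p) := by
          unfold wtNorm
          congr 1
          refine tsum_congr fun n => ?_
          by_cases h : n ∈ s
          · simp [hvs, h, Real.zero_rpow hp0]
          · simp [hvs, h]
        have heq2 : (∑' n : ℤ, (if n ∈ s then 0 else ‖v n‖ ^ p * (1 + (n.natAbs : ℝ)) ^ (p * β)))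
            = ∑' n : {x : ℤ // x ∉ s},
                ‖v (n:ℤ)‖ ^ p * (1 + ((n:ℤ).natAbs : ℝ)) ^ (p * β) := by
          calc (∑' n : ℤ, (if n ∈ s then 0 else ‖v n‖ ^ p * (1 + (n.natAbs : ℝ)) ^ (p * β)))
              = ∑' n : ℤ, Set.indicator {x : ℤ | x ∉ s}
                  (fun n => ‖v n‖ ^ p * (1 + (n.natAbs : ℝ)) ^ (p * β)) n := by
                refine tsum_congr fun n => ?_
                by_cases h : n ∈ s <;> simp [Set.indicator_apply, h]
            _ = ∑' n : {x : ℤ // x ∉ s},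
                ‖v (n:ℤ)‖ ^ p * (1 + ((n:ℤ).natAbs : ℝ)) ^ (p * β) :=
              (tsum_subtype {x : ℤ | x ∉ s}
                (fun n => ‖v n‖ ^ p * (1 + (n.natAbs : ℝ)) ^ (p * β))).symm
        rw [heq, heq2]
        have htail_nonneg : (0:ℝ) ≤ ∑' n : {x : ℤ // x ∉ s},
            ‖v (n:ℤ)‖ ^ p * (1 + ((n:ℤ).natAbs : ℝ)) ^ (p * β) :=
          tsum_nonneg fun n => by positivity
        calc (∑' n : {x : ℤ // x ∉ s},
              ‖v (n:ℤ)‖ ^ p * (1 + ((n:ℤ).natAbs : ℝ)) ^ (p * β)) ^ (1/p)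
            < (ε ^ p) ^ (1/p) := Real.rpow_lt_rpow htail_nonneg hs (by positivity)
          _ = ε := by
              rw [← Real.rpow_mul hε.le, mul_one_div_cancel hp0, Real.rpow_one]
    exact hfinal.2
end
end

section
/- Let u ∈ ℓ^1(ℤ) with ∑_{n∈ℤ} u_n = 0 (i.e. û(1) = 0). If the closed linear span in ℓ^1(ℤ) of {S_k u : k ≥ 0} equals the hyperplane {v ∈ ℓ^1(ℤ) : ∑_{n∈ℤ} v_n = 0}, then u is cyclic in ℓ^p(ℤ) for every p > 1. -/
open MeasureTheory Filter Set Complex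

noncomputable section

private lemma wtNorm_zero_eq (p : ℝ) (w : ℤ → ℂ) :
    wtNorm p 0 w = (∑' n : ℤ, ‖w n‖ ^ p) ^ (1 / p) := by
  simp [wtNorm]

private lemma memWt_zero_iff (p : ℝ) (w : ℤ → ℂ) :
    MemWt p 0 w ↔ Summable (fun n : ℤ => ‖w n‖ ^ p) := by
  simp [MemWt]

private lemma wtNorm_one_eq (w : ℤ → ℂ) :
    wtNorm 1 0 w = ∑' n : ℤ, ‖w n‖ := by
  norm_num [wtNorm]

private lemma memWt_one_iff (w : ℤ → ℂ) :
    MemWt 1 0 w ↔ Summable (fun n : ℤ => ‖w n‖) := by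
  simp [MemWt]

/-- ℓ¹ embeds into ℓᵖ with contractive norm. -/
private lemma l1_bound {p : ℝ} (hp : 1 ≤ p) {w : ℤ → ℂ} (hw : Summable fun n => ‖w n‖) :
    Summable (fun n : ℤ => ‖w n‖ ^ p) ∧
      (∑' n : ℤ, ‖w n‖ ^ p) ^ (1 / p) ≤ ∑' n : ℤ, ‖w n‖ := by
  have hp0 : 0 < p := lt_of_lt_of_le one_pos hp
  set S := ∑' n : ℤ, ‖w n‖ with hS
  have hS0 : 0 ≤ S := tsum_nonneg fun n => norm_nonneg _
  have hle : ∀ n, ‖w n‖ ≤ S := fun n => Summable.le_tsum hw n fun m _ => norm_nonneg _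
  have key : ∀ n, ‖w n‖ ^ p ≤ S ^ (p - 1) * ‖w n‖ := by
    intro n
    rcases eq_or_lt_of_le (norm_nonneg (w n)) with h | h
    · rw [← h, Real.zero_rpow hp0.ne', mul_zero]
    · have h1 : ‖w n‖ ^ p = ‖w n‖ ^ (p - 1) * ‖w n‖ := by
        have := Real.rpow_add_one (ne_of_gt h) (p - 1)
        simpa using this
      rw [h1]
      exact mul_le_mul_of_nonneg_right
        (Real.rpow_le_rpow h.le (hle n) (by linarith)) (norm_nonneg _)
  have hsum : Summable (fun n : ℤ => ‖w n‖ ^ p) :=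
    Summable.of_nonneg_of_le (fun n => Real.rpow_nonneg (norm_nonneg _) p) key
      (hw.mul_left _)
  refine ⟨hsum, ?_⟩
  have h1 : ∑' n : ℤ, ‖w n‖ ^ p ≤ S ^ (p - 1) * S := by
    calc ∑' n : ℤ, ‖w n‖ ^ p ≤ ∑' n : ℤ, S ^ (p - 1) * ‖w n‖ :=
          Summable.tsum_le_tsum key hsum (hw.mul_left _)
      _ = S ^ (p - 1) * S := by rw [tsum_mul_left]
  have htn : 0 ≤ ∑' n : ℤ, ‖w n‖ ^ p :=
    tsum_nonneg fun n => Real.rpow_nonneg (norm_nonneg _) _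
  rcases eq_or_lt_of_le hS0 with h0 | h0
  · have hz : ∑' n : ℤ, ‖w n‖ ^ p = 0 := by
      refine le_antisymm ?_ htn
      calc ∑' n : ℤ, ‖w n‖ ^ p ≤ S ^ (p - 1) * S := h1
        _ = 0 := by rw [← h0, mul_zero]
    rw [hz, Real.zero_rpow (by positivity : (1:ℝ)/p ≠ 0)]
    exact hS0
  · have hSp : S ^ (p - 1) * S = S ^ p := by
      have := Real.rpow_add h0 (p - 1) 1
      simp only [Real.rpow_one, sub_add_cancel] at this
      exact this.symm
    have h2 : ∑' n : ℤ, ‖w n‖ ^ p ≤ S ^ p := by rw [← hSp]; exact h1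
    calc (∑' n : ℤ, ‖w n‖ ^ p) ^ (1/p) ≤ (S ^ p) ^ (1/p) :=
          Real.rpow_le_rpow htn h2 (by positivity)
      _ = S := by
          rw [← Real.rpow_mul hS0, mul_one_div_cancel hp0.ne', Real.rpow_one]

/-- Triangle inequality for the (unweighted) ℓᵖ norm of pointwise sums. -/
private lemma wt_tri {p : ℝ} (hp : 1 ≤ p) {f g h : ℤ → ℂ}
    (hfg : ∀ n, f n = g n + h n)
    (hg : Summable fun n => ‖g n‖ ^ p) (hh : Summable fun n => ‖h n‖ ^ p) :
    Summable (fun n : ℤ => ‖f n‖ ^ p) ∧ wtNorm p 0 f ≤ wtNorm p 0 g + wtNorm p 0 h := by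
  have hp0 : 0 < p := lt_of_lt_of_le one_pos hp
  have hpt : ∀ n, ‖f n‖ ^ p ≤ (‖g n‖ + ‖h n‖) ^ p := by
    intro n
    exact Real.rpow_le_rpow (norm_nonneg _) (by rw [hfg n]; exact norm_add_le _ _) hp0.le
  have hS : Summable fun n : ℤ => (‖g n‖ + ‖h n‖) ^ p :=
    Real.summable_Lp_add_of_nonneg hp (fun n => norm_nonneg _) (fun n => norm_nonneg _) hg hh
  have hfs : Summable (fun n : ℤ => ‖f n‖ ^ p) :=
    Summable.of_nonneg_of_le (fun n => Real.rpow_nonneg (norm_nonneg _) _) hpt hS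
  refine ⟨hfs, ?_⟩
  rw [wtNorm_zero_eq, wtNorm_zero_eq, wtNorm_zero_eq]
  calc (∑' n : ℤ, ‖f n‖ ^ p) ^ (1/p)
      ≤ (∑' n : ℤ, (‖g n‖ + ‖h n‖) ^ p) ^ (1/p) :=
        Real.rpow_le_rpow
          (tsum_nonneg fun n => Real.rpow_nonneg (norm_nonneg _) _)
          (Summable.tsum_le_tsum hpt hfs hS) (by positivity)
    _ ≤ (∑' n : ℤ, ‖g n‖ ^ p) ^ (1/p) + (∑' n : ℤ, ‖h n‖ ^ p) ^ (1/p) :=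
        Real.Lp_add_le_tsum_of_nonneg' hp (fun n => norm_nonneg _) (fun n => norm_nonneg _) hg hh

/-- A finite linear combination of shifts of an ℓ¹ sequence is ℓ¹. -/
private lemma conv_l1 (a : ℤ →₀ ℂ) {u : ℤ → ℂ} (hu : Summable fun n : ℤ => ‖u n‖) :
    Summable fun n : ℤ => ‖convFin a u n‖ := by
  have h1 : ∀ k : ℤ, Summable fun n : ℤ => ‖a k * u (n - k)‖ := by
    intro k
    have hinj : Function.Injective (fun n : ℤ => n - k) := fun x y hxy => by
      simpa using congrArg (· + k) hxy
    have : Summable fun n : ℤ => ‖u (n - k)‖ := by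
      have := hu.comp_injective hinj
      exact this
    simpa [norm_mul] using this.mul_left ‖a k‖
  have h2 : Summable fun n : ℤ => ∑ k ∈ a.support, ‖a k * u (n - k)‖ :=
    summable_sum fun k _ => h1 k
  exact Summable.of_nonneg_of_le (fun n => norm_nonneg _)
    (fun n => norm_sum_le _ _) h2

/-- Let `u ∈ ℓ¹(ℤ)` with `∑_n u n = 0`.  If the closed linear span in
`ℓ¹(ℤ)` of `{S_k u : k ≥ 0}` equals the hyperplane `{v ∈ ℓ¹(ℤ) : ∑_n v n = 0}`, then `u`
is cyclic in `ℓ^p(ℤ)` for every `p > 1`. -/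
theorem stmt6 (u : ℤ → ℂ) (hu : Summable fun n : ℤ => ‖u n‖)
    (hsum : ∑' n : ℤ, u n = 0)
    (hspan : ∀ v : ℤ → ℂ, MemWt 1 0 v →
      (InClosedSpanShifts 1 0 {k : ℤ | 0 ≤ k} u v ↔ ∑' n : ℤ, v n = 0)) :
    ∀ p : ℝ, 1 < p → IsCyclicIn p 0 u := by
  intro p hp
  have hp1 : 1 ≤ p := hp.le
  have hp0 : 0 < p := by linarith
  constructor
  · exact (memWt_zero_iff p u).mpr (l1_bound hp1 hu).1
  · intro v hv ε hε
    rw [memWt_zero_iff] at hv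
    have hε3 : (0:ℝ) < ε / 3 := by linarith
    have hδ : (0:ℝ) < (ε/3) ^ p := Real.rpow_pos_of_pos hε3 p
    set L : ℝ := ∑' n : ℤ, ‖v n‖ ^ p with hL
    -- Step 1: truncation
    obtain ⟨F, hF⟩ : ∃ F : Finset ℤ, L - (ε/3) ^ p < ∑ n ∈ F, ‖v n‖ ^ p := by
      have h2 := hv.hasSum.eventually (lt_mem_nhds (show L - (ε/3)^p < L by linarith))
      exact h2.exists
    have htail : ∑' n : {x : ℤ // x ∉ F}, ‖v n.1‖ ^ p < (ε/3) ^ p := by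
      have h3 := Summable.sum_add_tsum_subtype_compl hv F
      linarith
    set v₁ : ℤ → ℂ := fun n => if n ∈ F then v n else 0 with hv₁def
    have hd1sum : Summable fun n : ℤ => ‖v n - v₁ n‖ ^ p := by
      refine Summable.of_nonneg_of_le (fun n => Real.rpow_nonneg (norm_nonneg _) _)
        (fun n => ?_) hv
      refine Real.rpow_le_rpow (norm_nonneg _) ?_ hp0.le
      by_cases h : n ∈ F <;> simp [hv₁def, h]
    have hd1 : ∑' n : ℤ, ‖v n - v₁ n‖ ^ p < (ε/3) ^ p := by
      have hind : ∀ n : ℤ, ‖v n - v₁ n‖ ^ p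
          = Set.indicator {x : ℤ | x ∉ F} (fun m : ℤ => ‖v m‖ ^ p) n := by
        intro n
        by_cases h : n ∈ F <;>
          simp [hv₁def, h, Set.indicator_apply, Real.zero_rpow hp0.ne']
      calc ∑' n : ℤ, ‖v n - v₁ n‖ ^ p
          = ∑' n : {x : ℤ | x ∉ F}, ‖v n.1‖ ^ p := by
            rw [tsum_congr hind, ← tsum_subtype]
        _ < (ε/3) ^ p := htail
    -- Step 2: correction making the sum zero
    set s : ℂ := ∑ n ∈ F, v n with hs
    obtain ⟨N, hN⟩ := exists_nat_gt (max 1 ((‖s‖ ^ p / (ε/3) ^ p) ^ (1 / (p - 1))))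
    have hN1 : (1:ℝ) < N := lt_of_le_of_lt (le_max_left _ _) hN
    have hNpos : (0:ℝ) < N := by linarith
    have hNne : (N:ℂ) ≠ 0 := by
      exact_mod_cast ne_of_gt (show (0:ℝ) < (N:ℝ) from hNpos)
    set g : ℤ → ℂ := fun n => if n ∈ Finset.Icc (1:ℤ) (N:ℤ) then s / (N:ℂ) else 0 with hgdef
    have hg0 : ∀ n : ℤ, n ∉ Finset.Icc (1:ℤ) (N:ℤ) → g n = 0 := fun n h => by
      rw [hgdef]; exact if_neg h
    have hgval : ∀ n ∈ Finset.Icc (1:ℤ) (N:ℤ), g n = s / (N:ℂ) := fun n h => by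
      rw [hgdef]; exact if_pos h
    set v₂ : ℤ → ℂ := fun n => v₁ n - g n with hv₂def
    have hpt12 : ∀ n : ℤ, v₁ n - v₂ n = g n := fun n => by rw [hv₂def]; ring
    have hv₁l1 : Summable fun n : ℤ => ‖v₁ n‖ := by
      refine summable_of_ne_finset_zero (s := F) ?_
      intro n h; simp [hv₁def, h]
    have hgl1 : Summable fun n : ℤ => ‖g n‖ := by
      refine summable_of_ne_finset_zero (s := Finset.Icc (1:ℤ) (N:ℤ)) ?_
      intro n h; rw [hg0 n h]; simp
    have hv₂l1 : Summable fun n : ℤ => ‖v₂ n‖ := by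
      refine Summable.of_nonneg_of_le (fun n => norm_nonneg _)
        (fun n => norm_sub_le _ _) (hv₁l1.add hgl1)
    have hcard : (Finset.Icc (1:ℤ) (N:ℤ)).card = N := by
      rw [Int.card_Icc]; simp
    have hts_v₁ : ∑' n : ℤ, v₁ n = s := by
      rw [tsum_eq_sum (s := F) (by intro n h; simp [hv₁def, h])]
      exact Finset.sum_congr rfl fun n h => by simp [hv₁def, h]
    have hts_g : ∑' n : ℤ, g n = s := by
      rw [tsum_eq_sum (s := Finset.Icc (1:ℤ) (N:ℤ)) (fun n h => hg0 n h),
        Finset.sum_congr rfl hgval, Finset.sum_const, hcard, nsmul_eq_mul]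
      field_simp
    have hv₂sum0 : ∑' n : ℤ, v₂ n = 0 := by
      have h1 : Summable v₁ := hv₁l1.of_norm
      have h2 : Summable g := hgl1.of_norm
      rw [hv₂def, Summable.tsum_sub h1 h2, hts_v₁, hts_g, sub_self]
    -- Step 3: approximate v₂ in ℓ¹ by the hypothesis
    obtain ⟨a, haΛ, hanorm⟩ :=
      ((hspan v₂ ((memWt_one_iff v₂).mpr hv₂l1)).mpr hv₂sum0) (ε/3) hε3
    refine ⟨a, haΛ, ?_⟩
    have hconv : Summable fun n : ℤ => ‖convFin a u n‖ := conv_l1 a hu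
    have hd3l1 : Summable fun n : ℤ => ‖v₂ n - convFin a u n‖ :=
      Summable.of_nonneg_of_le (fun n => norm_nonneg _)
        (fun n => norm_sub_le _ _) (hv₂l1.add hconv)
    have hd3p := l1_bound hp1 hd3l1
    have hd3lt : wtNorm p 0 (fun n => v₂ n - convFin a u n) < ε/3 := by
      rw [wtNorm_zero_eq]
      refine lt_of_le_of_lt hd3p.2 ?_
      rw [wtNorm_one_eq] at hanorm
      exact hanorm
    -- Step 4: the correction term is small in ℓᵖ
    have hgp : ∑' n : ℤ, ‖g n‖ ^ p < (ε/3) ^ p := by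
      have heq : ∑' n : ℤ, ‖g n‖ ^ p = (N:ℝ) * (‖s‖ / N) ^ p := by
        have hgnorm : ∀ n ∈ Finset.Icc (1:ℤ) (N:ℤ), ‖g n‖ ^ p = (‖s‖ / (N:ℝ)) ^ p := by
          intro n h
          rw [hgval n h, norm_div, Complex.norm_natCast]
        rw [tsum_eq_sum (s := Finset.Icc (1:ℤ) (N:ℤ))
          (by intro n h; rw [hg0 n h]; simp [Real.zero_rpow hp0.ne']),
          Finset.sum_congr rfl hgnorm, Finset.sum_const, hcard, nsmul_eq_mul]
      rw [heq]
      set D : ℝ := ‖s‖ ^ p / (ε/3) ^ p with hD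
      have hD0 : 0 ≤ D := by positivity
      have hND : D ^ (1/(p-1)) < N := lt_of_le_of_lt (le_max_right _ _) hN
      have hNp : D < (N:ℝ) ^ (p - 1) := by
        have h4 := Real.rpow_lt_rpow (Real.rpow_nonneg hD0 _) hND
          (show (0:ℝ) < p - 1 by linarith)
        rwa [← Real.rpow_mul hD0, one_div_mul_cancel
          (show p - 1 ≠ 0 by intro h; linarith), Real.rpow_one] at h4
      have hNppos : (0:ℝ) < (N:ℝ) ^ (p - 1) := Real.rpow_pos_of_pos hNpos _
      have key : ‖s‖ ^ p < (ε/3) ^ p * (N:ℝ) ^ (p - 1) := by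
        calc ‖s‖ ^ p = (ε/3) ^ p * D := by rw [hD]; field_simp
          _ < (ε/3) ^ p * (N:ℝ) ^ (p - 1) := by
            exact mul_lt_mul_of_pos_left hNp hδ
      have hrw : (N:ℝ) * (‖s‖ / N) ^ p = ‖s‖ ^ p / (N:ℝ) ^ (p - 1) := by
        rw [Real.div_rpow (norm_nonneg _) hNpos.le, Real.rpow_sub hNpos, Real.rpow_one]
        have hNpne : ((N:ℝ) ^ p) ≠ 0 := ne_of_gt (Real.rpow_pos_of_pos hNpos _)
        field_simp
      rw [hrw, div_lt_iff₀ hNppos]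
      linarith [key]
    have hd2sum : Summable fun n : ℤ => ‖g n‖ ^ p := by
      refine summable_of_ne_finset_zero (s := Finset.Icc (1:ℤ) (N:ℤ)) ?_
      intro n h; rw [hg0 n h]; simp [Real.zero_rpow hp0.ne']
    have hd2sum' : Summable fun n : ℤ => ‖v₁ n - v₂ n‖ ^ p := by
      simp only [hpt12]; exact hd2sum
    have hd2lt : wtNorm p 0 (fun n => v₁ n - v₂ n) < ε/3 := by
      rw [show (fun n : ℤ => v₁ n - v₂ n) = g from funext hpt12, wtNorm_zero_eq]
      calc (∑' n : ℤ, ‖g n‖ ^ p) ^ (1/p) < ((ε/3) ^ p) ^ (1/p) := by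
            exact Real.rpow_lt_rpow
              (tsum_nonneg fun n => Real.rpow_nonneg (norm_nonneg _) _) hgp (by positivity)
        _ = ε/3 := by
            rw [← Real.rpow_mul hε3.le, mul_one_div_cancel hp0.ne', Real.rpow_one]
    have hd1lt : wtNorm p 0 (fun n => v n - v₁ n) < ε/3 := by
      rw [wtNorm_zero_eq]
      calc (∑' n : ℤ, ‖v n - v₁ n‖ ^ p) ^ (1/p) < ((ε/3) ^ p) ^ (1/p) := by
            exact Real.rpow_lt_rpow
              (tsum_nonneg fun n => Real.rpow_nonneg (norm_nonneg _) _) hd1 (by positivity)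
        _ = ε/3 := by
            rw [← Real.rpow_mul hε3.le, mul_one_div_cancel hp0.ne', Real.rpow_one]
    -- Step 5: combine via the triangle inequality
    have t1 := wt_tri hp1 (f := fun n => v₁ n - convFin a u n)
      (g := fun n => v₁ n - v₂ n) (h := fun n => v₂ n - convFin a u n)
      (fun n => by ring) hd2sum' hd3p.1
    have t2 := wt_tri hp1 (f := fun n => v n - convFin a u n)
      (g := fun n => v n - v₁ n) (h := fun n => v₁ n - convFin a u n)
      (fun n => by ring) hd1sum t1.1
    calc wtNorm p 0 (fun n => v n - convFin a u n)
        ≤ wtNorm p 0 (fun n => v n - v₁ n)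
          + wtNorm p 0 (fun n => v₁ n - convFin a u n) := t2.2
      _ ≤ wtNorm p 0 (fun n => v n - v₁ n)
          + (wtNorm p 0 (fun n => v₁ n - v₂ n)
            + wtNorm p 0 (fun n => v₂ n - convFin a u n)) := by
            exact add_le_add (le_refl _) t1.2
      _ < ε/3 + (ε/3 + ε/3) := add_lt_add hd1lt (add_lt_add hd2lt hd3lt)
      _ = ε := by ring
end
end
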